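/- arXiv:2011.07781 — 8 statements merged into one kernel-verified Lean document; each statement's English description precedes it below -/
import Mathlib

section
/- For every s ∈ [0, 2π], one has 0 ≤ 2(1 − cos s) ≤ s² · e^{−s²/12}. -/
/-!
Euler's product `sin (π x) = π x ∏ (1 - x² / k²)` has factors in `[0, 1]` when `|x| ≤ 1`.
Bounding each factor by `1 - u ≤ exp (-u)` and summing `∑ 1 / k² = π² / 6` gives
`|sin t| ≤ |t| exp (-t² / 6)` for `|t| ≤ π`; squaring at `t = s / 2` and using
`2 (1 - cos s) = 4 sin² (s / 2)` yields the Gaussian majorant.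
-/

open Real Filter Topology

namespace Real

lemma tendsto_sum_range_one_div_succ_sq :
    Tendsto (fun n : ℕ => ∑ j ∈ Finset.range n, 1 / ((j : ℝ) + 1) ^ 2) atTop
      (𝓝 (π ^ 2 / 6)) := by
  have h := (hasSum_nat_add_iff' 1).mpr hasSum_zeta_two
  simpa using h.tendsto_sum_nat

lemma abs_sin_pi_mul_le_mul_exp {x : ℝ} (hx : |x| ≤ 1) :
    |sin (π * x)| ≤ |π * x| * exp (-(π * x) ^ 2 / 6) := by
  have hfactor_nonneg (j : ℕ) : 0 ≤ 1 - x ^ 2 / ((j : ℝ) + 1) ^ 2 := by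
    rw [sub_nonneg, div_le_one (by positivity)]
    exact ((sq_le_one_iff_abs_le_one x).2 hx).trans
      (one_le_pow₀ (le_add_of_nonneg_left j.cast_nonneg))
  have hpartial (n : ℕ) :
      |π * x * ∏ j ∈ Finset.range n, (1 - x ^ 2 / ((j : ℝ) + 1) ^ 2)| ≤
        |π * x| * exp (-x ^ 2 * ∑ j ∈ Finset.range n, 1 / ((j : ℝ) + 1) ^ 2) := by
    rw [abs_mul, Finset.abs_prod, Finset.mul_sum, exp_sum]
    gcongr with j
    rw [abs_of_nonneg (hfactor_nonneg j), mul_one_div, neg_div]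
    exact one_sub_le_exp_neg _
  have hlim : Tendsto (fun n : ℕ => |π * x| * exp (-x ^ 2 * ∑ j ∈ Finset.range n,
      1 / ((j : ℝ) + 1) ^ 2)) atTop (𝓝 (|π * x| * exp (-x ^ 2 * (π ^ 2 / 6)))) :=
    ((continuous_exp.tendsto _).comp (tendsto_sum_range_one_div_succ_sq.const_mul _)).const_mul _
  calc |sin (π * x)| ≤ |π * x| * exp (-x ^ 2 * (π ^ 2 / 6)) :=
        le_of_tendsto_of_tendsto' (tendsto_euler_sin_prod x).abs hlim hpartial
    _ = |π * x| * exp (-(π * x) ^ 2 / 6) := by ring_nf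

lemma sin_sq_le_sq_mul_exp {t : ℝ} (ht : |t| ≤ π) :
    sin t ^ 2 ≤ t ^ 2 * exp (-t ^ 2 / 3) := by
  have hx : |t / π| ≤ 1 := by rwa [abs_div, abs_of_pos pi_pos, div_le_one pi_pos]
  have h := abs_sin_pi_mul_le_mul_exp hx
  rw [mul_div_cancel₀ t pi_ne_zero] at h
  calc sin t ^ 2 = |sin t| ^ 2 := (sq_abs _).symm
    _ ≤ (|t| * exp (-t ^ 2 / 6)) ^ 2 := by gcongr
    _ = t ^ 2 * exp (-t ^ 2 / 3) := by
      rw [mul_pow, sq_abs, ← exp_nat_mul]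
      ring_nf

end Real

/-- For every `s ∈ [0, 2π]`, `0 ≤ 2(1 - cos s) ≤ s² e^{-s²/12}`. -/
theorem stmt2 (s : ℝ) (hs : s ∈ Set.Icc 0 (2 * Real.pi)) :
    0 ≤ 2 * (1 - Real.cos s) ∧
      2 * (1 - Real.cos s) ≤ s ^ 2 * Real.exp (-(s ^ 2) / 12) := by
  refine ⟨by linarith [cos_le_one s], ?_⟩
  have hhalf : |s / 2| ≤ π := by
    rw [abs_of_nonneg (by linarith [hs.1])]
    linarith [hs.2]
  calc 2 * (1 - cos s) = 4 * sin (s / 2) ^ 2 := by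
        rw [sin_sq, cos_sq, mul_div_cancel₀ s two_ne_zero]
        ring
    _ ≤ 4 * ((s / 2) ^ 2 * exp (-(s / 2) ^ 2 / 3)) := by gcongr; exact sin_sq_le_sq_mul_exp hhalf
    _ = s ^ 2 * exp (-(s ^ 2) / 12) := by ring_nf
end

section
/- For any two non-singular probability measures F₁ and F₂ on ℝ, there exist a > 0, u ∈ ℝ, θ ∈ (0,1] and a probability measure H on ℝ such that F₁ ∗ F₂ = (1 − θ)·H + θ·(K_a ∗ δ_u), where ∗ denotes convolution of measures and δ_u is the Dirac measure at u. -/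
open MeasureTheory

/-- The triangular density with parameter `a`. -/
noncomputable def triDensity (a : ℝ) (x : ℝ) : ℝ :=
  if |x| ≤ a then (1 / a) * (1 - |x| / a) else 0

/-- `K_a`, the probability measure on `ℝ` with the triangular density `κ_a`. -/
noncomputable def triMeasure (a : ℝ) : Measure ℝ :=
  volume.withDensity fun x => ENNReal.ofReal (triDensity a x)

/-- The total mass of the absolutely continuous part (w.r.t. Lebesgue measure) of a measure
on `ℝ` in its Lebesgue decomposition. -/
noncomputable def acMass (μ : Measure ℝ) : ℝ :=
  ((volume.withDensity (μ.rnDeriv volume)) Set.univ).toReal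

/-!
Each `Fᵢ` dominates `cᵢ • volume` on a set `Aᵢ` of positive measure, and by the Lebesgue density
theorem `Aᵢ` fills more than `3/4` of some interval `[xᵢ - r, xᵢ + r]`. Two such sets meet, after
the reflection-translation `w ↦ z - w`, in measure at least
`3r/2 + 3r/2 - (|z - (x₁ + x₂)| + 2r) = r² κ_r (z - (x₁ + x₂))`.
Hence the density of `F₁ ∗ F₂` dominates `c₁ c₂ r² κ_r(· - (x₁ + x₂))`, i.e.
`θ • (K_r ∗ δ_{x₁+x₂}) ≤ F₁ ∗ F₂` for small `θ > 0`, and `H` is the normalised remainder.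
-/

open Set Filter
open scoped ENNReal Topology

lemma measurable_triDensity (a : ℝ) : Measurable (triDensity a) :=
  Measurable.ite (measurableSet_le (by fun_prop) measurable_const) (by fun_prop) measurable_const

lemma triDensity_nonneg (a x : ℝ) : 0 ≤ triDensity a x := by
  unfold triDensity
  split_ifs with hx
  · have ha : 0 ≤ a := (abs_nonneg x).trans hx
    have hxa : |x| / a ≤ 1 := div_le_one_of_le₀ hx ha
    have : 0 ≤ 1 - |x| / a := sub_nonneg.2 hxa
    positivity
  · exact le_rfl

lemma ofReal_sq_mul_triDensity {r : ℝ} (hr : 0 < r) (y : ℝ) :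
    ENNReal.ofReal (r ^ 2 * triDensity r y) = ENNReal.ofReal (r - |y|) := by
  unfold triDensity
  split_ifs with hy
  · congr 1; field_simp
  · rw [mul_zero, ENNReal.ofReal_zero, eq_comm, ENNReal.ofReal_eq_zero]; linarith

lemma integral_triDensity {a : ℝ} (ha : 0 < a) : ∫ x, triDensity a x = 1 := by
  have hIoi : ∫ t in Ioi 0, (if t ≤ a then 1 / a * (1 - t / a) else 0)
      = ∫ t in (0)..a, 1 / a * (1 - t / a) := by
    rw [intervalIntegral.integral_of_le ha.le, ← Ioi_inter_Iic, inter_comm,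
      ← Measure.restrict_restrict measurableSet_Iic, ← integral_indicator measurableSet_Iic]
    rfl
  simp only [triDensity]
  rw [integral_comp_abs (f := fun t => if t ≤ a then 1 / a * (1 - t / a) else 0), hIoi,
    intervalIntegral.integral_const_mul, intervalIntegral.integral_sub intervalIntegrable_const
      (intervalIntegral.intervalIntegrable_id.div_const a), intervalIntegral.integral_div,
    integral_id, intervalIntegral.integral_const, smul_eq_mul]
  field_simp
  ring

lemma isProbabilityMeasure_triMeasure {a : ℝ} (ha : 0 < a) :
    IsProbabilityMeasure (triMeasure a) := by
  constructor
  have hlin := integral_eq_lintegral_of_nonneg_ae (μ := volume)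
    (Eventually.of_forall (triDensity_nonneg a)) (measurable_triDensity a).aestronglyMeasurable
  rw [integral_triDensity ha, eq_comm, ENNReal.toReal_eq_one_iff] at hlin
  rw [triMeasure, withDensity_apply _ MeasurableSet.univ, Measure.restrict_univ, hlin]

namespace MeasureTheory.Measure

variable {G : Type*} [MeasurableSpace G] [AddGroup G] [MeasurableAdd₂ G]

theorem conv_mono {μ μ' ν ν' : Measure G} [SFinite ν'] (hμ : μ ≤ μ') (hν : ν ≤ ν') :
    μ.conv ν ≤ μ'.conv ν' :=
  map_mono (prod_mono hμ hν) measurable_add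

theorem withDensity_conv_dirac [MeasurableSub G] (μ : Measure G) [SFinite μ]
    [IsAddRightInvariant μ] {f : G → ℝ≥0∞} (hf : Measurable f) (u : G) :
    (μ.withDensity f).conv (dirac u) = μ.withDensity fun z => f (z - u) := by
  refine ext_of_lintegral _ fun φ hφ => ?_
  rw [conv_dirac, lintegral_map hφ (measurable_add_const u),
    lintegral_withDensity_eq_lintegral_mul _ hf (g := fun z => φ (z + u)) (by fun_prop),
    lintegral_withDensity_eq_lintegral_mul _ (f := fun z => f (z - u))
      (hf.comp (measurable_sub_const u)) hφ,
    ← lintegral_sub_right_eq_self _ u]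
  simp only [Pi.mul_apply, sub_add_cancel]

end MeasureTheory.Measure

lemma mul_measure_inter_le_lconvolution {G : Type*} [MeasurableSpace G] [AddGroup G]
    [MeasurableAdd G] [MeasurableNeg G] {μ : Measure G} {f g : G → ℝ≥0∞} {a b : ℝ≥0∞}
    {A B : Set G} (hA : MeasurableSet A) (hB : MeasurableSet B)
    (hfA : ∀ x ∈ A, a ≤ f x) (hgB : ∀ x ∈ B, b ≤ g x) (z : G) :
    a * b * μ (A ∩ (fun y => -y + z) ⁻¹' B) ≤ (f ⋆ₗ[μ] g) z := by
  have hAB : MeasurableSet (A ∩ (fun y => -y + z) ⁻¹' B) :=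
    hA.inter (hB.preimage (measurable_neg.add_const z))
  calc a * b * μ (A ∩ (fun y => -y + z) ⁻¹' B)
      = ∫⁻ _ in A ∩ (fun y => -y + z) ⁻¹' B, a * b ∂μ := (setLIntegral_const _ _).symm
    _ ≤ ∫⁻ y in A ∩ (fun y => -y + z) ⁻¹' B, f y * g (-y + z) ∂μ :=
        setLIntegral_mono' hAB fun y hy => mul_le_mul' (hfA y hy.1) (hgB _ hy.2)
    _ ≤ (f ⋆ₗ[μ] g) z := setLIntegral_le_lintegral _ _

lemma exists_isProbabilityMeasure_eq_smul_add_smul {α : Type*} [MeasurableSpace α]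
    {μ ν : Measure α} [IsProbabilityMeasure μ] [IsProbabilityMeasure ν] {θ : ℝ} (hθ₀ : 0 ≤ θ)
    (hθ₁ : θ < 1) (h : ENNReal.ofReal θ • ν ≤ μ) :
    ∃ H : Measure α, IsProbabilityMeasure H ∧
      μ = ENNReal.ofReal (1 - θ) • H + ENNReal.ofReal θ • ν := by
  have h0 : ENNReal.ofReal (1 - θ) ≠ 0 := by simpa using hθ₁
  have : IsFiniteMeasure (ENNReal.ofReal θ • ν) := ν.smul_finite ENNReal.ofReal_ne_top
  refine ⟨(ENNReal.ofReal (1 - θ))⁻¹ • (μ - ENNReal.ofReal θ • ν), ⟨?_⟩, ?_⟩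
  · rw [Measure.smul_apply, Measure.sub_apply MeasurableSet.univ h, Measure.smul_apply,
      measure_univ, measure_univ, smul_eq_mul, smul_eq_mul, mul_one, ← ENNReal.ofReal_one,
      ← ENNReal.ofReal_sub _ hθ₀, ENNReal.inv_mul_cancel h0 ENNReal.ofReal_ne_top,
      ENNReal.ofReal_one]
  · rw [smul_smul, ENNReal.mul_inv_cancel h0 ENNReal.ofReal_ne_top, one_smul,
      Measure.sub_add_cancel_of_le h]

lemma exists_volume_setOf_le_rnDeriv_ne_zero {μ : Measure ℝ} (h : 0 < acMass μ) :
    ∃ c : ℝ, 0 < c ∧ volume {x | ENNReal.ofReal c ≤ μ.rnDeriv volume x} ≠ 0 := by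
  by_contra! hc
  have hzero : μ.rnDeriv volume =ᵐ[volume] 0 := by
    have hsub : {x | μ.rnDeriv volume x ≠ 0} ⊆
        ⋃ n : ℕ, {x | ENNReal.ofReal (n + 1 : ℝ)⁻¹ ≤ μ.rnDeriv volume x} := by
      intro x hx
      obtain ⟨n, hn⟩ := ENNReal.exists_inv_nat_lt hx
      refine mem_iUnion.2 ⟨n, le_trans ?_ hn.le⟩
      rw [ENNReal.ofReal_inv_of_pos (by positivity)]
      refine ENNReal.inv_le_inv.2 ?_
      exact (ENNReal.ofReal_natCast n).ge.trans (ENNReal.ofReal_le_ofReal (by linarith))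
    exact measure_mono_null hsub (measure_iUnion_null fun n => hc _ (by positivity))
  simp [acMass, withDensity_congr_ae hzero] at h

lemma exists_eventually_ofReal_mul_lt_volume_inter_Icc {A : Set ℝ} (hA : volume A ≠ 0)
    {t : ℝ} (ht : t < 1) :
    ∃ x, ∀ᶠ r in 𝓝[>] 0, ENNReal.ofReal (t * (2 * r)) < volume (A ∩ Icc (x - r) (x + r)) := by
  obtain ⟨x, -, hx⟩ := Measure.exists_mem_of_measure_ne_zero_of_ae hA
    (Besicovitch.ae_tendsto_measure_inter_div volume A)
  refine ⟨x, ?_⟩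
  filter_upwards [hx.eventually (eventually_gt_nhds (ENNReal.ofReal_lt_one.2 ht)),
    self_mem_nhdsWithin] with r hlt (hr : 0 < r)
  rw [Real.volume_closedBall, Real.closedBall_eq_Icc] at hlt
  rw [ENNReal.ofReal_mul' (by positivity)]
  exact (ENNReal.lt_div_iff_mul_lt (Or.inr ENNReal.ofReal_ne_top)
    (Or.inl ENNReal.ofReal_ne_top)).1 hlt

lemma volume_add_volume_le_volume_inter_add {A B : Set ℝ} {x y r : ℝ} (hB : MeasurableSet B)
    (hAx : A ⊆ Icc (x - r) (x + r)) (hBy : B ⊆ Icc (y - r) (y + r)) :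
    volume A + volume B ≤ volume (A ∩ B) + ENNReal.ofReal (|x - y| + 2 * r) := by
  rw [← measure_union_add_inter A hB, add_comm]
  gcongr
  calc volume (A ∪ B) ≤ volume (Icc (min x y - r) (max x y + r)) := by
        refine measure_mono (union_subset (hAx.trans ?_) (hBy.trans ?_)) <;>
          exact Icc_subset_Icc (by simp) (by simp)
    _ = ENNReal.ofReal (|x - y| + 2 * r) := by
        rw [Real.volume_Icc, ← max_sub_min_eq_abs']
        ring_nf

lemma ofReal_sub_abs_le_volume_inter_preimage {A B : Set ℝ} {x y r : ℝ} (hr : 0 ≤ r)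
    (hB : MeasurableSet B) (hAx : A ⊆ Icc (x - r) (x + r)) (hBy : B ⊆ Icc (y - r) (y + r))
    (hA : ENNReal.ofReal (3 / 4 * (2 * r)) ≤ volume A)
    (hB' : ENNReal.ofReal (3 / 4 * (2 * r)) ≤ volume B) (z : ℝ) :
    ENNReal.ofReal (r - |z - (x + y)|) ≤ volume (A ∩ (fun w => -w + z) ⁻¹' B) := by
  simp_rw [neg_add_eq_sub]
  have hCz : (fun w => z - w) ⁻¹' B ⊆ Icc (z - y - r) (z - y + r) := fun w hw => by
    have := hBy hw
    simp only [mem_Icc] at this ⊢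
    constructor <;> linarith [this.1, this.2]
  have hC : volume ((fun w => z - w) ⁻¹' B) = volume B :=
    (Measure.measurePreserving_sub_left volume z).measure_preimage hB.nullMeasurableSet
  have key := volume_add_volume_le_volume_inter_add ((measurable_const_sub z) hB) hAx hCz
  rw [hC, show |x - (z - y)| = |z - (x + y)| by rw [abs_sub_comm]; ring_nf] at key
  calc ENNReal.ofReal (r - |z - (x + y)|)
      = ENNReal.ofReal (3 / 4 * (2 * r) + 3 / 4 * (2 * r))
          - ENNReal.ofReal (|z - (x + y)| + 2 * r) := by
        rw [← ENNReal.ofReal_sub _ (by positivity)]; ring_nf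
    _ ≤ volume (A ∩ (fun w => z - w) ⁻¹' B) := by
        rw [tsub_le_iff_right, ENNReal.ofReal_add (by positivity) (by positivity)]
        exact (add_le_add hA hB').trans key

lemma smul_triMeasure_conv_dirac_le_conv {μ ν : Measure ℝ} [SFinite ν] {c₁ c₂ r x₁ x₂ : ℝ}
    (hc₁ : 0 ≤ c₁) (hc₂ : 0 ≤ c₂) (hr : 0 < r)
    (h₁ : ENNReal.ofReal (3 / 4 * (2 * r)) ≤
      volume ({x | ENNReal.ofReal c₁ ≤ μ.rnDeriv volume x} ∩ Icc (x₁ - r) (x₁ + r)))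
    (h₂ : ENNReal.ofReal (3 / 4 * (2 * r)) ≤
      volume ({x | ENNReal.ofReal c₂ ≤ ν.rnDeriv volume x} ∩ Icc (x₂ - r) (x₂ + r))) :
    ENNReal.ofReal (c₁ * c₂ * r ^ 2) • (triMeasure r).conv (Measure.dirac (x₁ + x₂))
      ≤ μ.conv ν := by
  have hA :
      MeasurableSet ({x | ENNReal.ofReal c₁ ≤ μ.rnDeriv volume x} ∩ Icc (x₁ - r) (x₁ + r)) :=
    (measurableSet_le measurable_const (μ.measurable_rnDeriv _)).inter measurableSet_Icc
  have hB :
      MeasurableSet ({x | ENNReal.ofReal c₂ ≤ ν.rnDeriv volume x} ∩ Icc (x₂ - r) (x₂ + r)) :=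
    (measurableSet_le measurable_const (ν.measurable_rnDeriv _)).inter measurableSet_Icc
  calc ENNReal.ofReal (c₁ * c₂ * r ^ 2) • (triMeasure r).conv (Measure.dirac (x₁ + x₂))
      = volume.withDensity fun z => ENNReal.ofReal c₁ * ENNReal.ofReal c₂
          * ENNReal.ofReal (r - |z - (x₁ + x₂)|) := by
        rw [triMeasure, Measure.withDensity_conv_dirac _ (measurable_triDensity r).ennreal_ofReal,
          ← withDensity_smul' _ _ ENNReal.ofReal_ne_top]
        congr 1 with z
        rw [Pi.smul_apply, smul_eq_mul, ← ofReal_sq_mul_triDensity hr, ← ENNReal.ofReal_mul hc₁,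
          ← ENNReal.ofReal_mul (by positivity), ← ENNReal.ofReal_mul (by positivity)]
        ring_nf
    _ ≤ volume.withDensity (μ.rnDeriv volume ⋆ₗ ν.rnDeriv volume) :=
        withDensity_mono (Eventually.of_forall fun z =>
          (mul_le_mul_right (ofReal_sub_abs_le_volume_inter_preimage hr.le hB
            inter_subset_right inter_subset_right h₁ h₂ z) _).trans
          (mul_measure_inter_le_lconvolution hA hB (fun _ hx => hx.1) (fun _ hx => hx.1) z))
    _ = (volume.withDensity (μ.rnDeriv volume)).conv (volume.withDensity (ν.rnDeriv volume)) :=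
        (conv_withDensity_eq_lconvolution (μ.measurable_rnDeriv _) (ν.measurable_rnDeriv _)).symm
    _ ≤ μ.conv ν := Measure.conv_mono (μ.withDensity_rnDeriv_le _) (ν.withDensity_rnDeriv_le _)

/-- For any two non-singular probability measures `F₁, F₂` on `ℝ` there are `a > 0`, `u ∈ ℝ`,
`θ ∈ (0,1]` and a probability measure `H` with
`F₁ ∗ F₂ = (1-θ)·H + θ·(K_a ∗ δ_u)`. -/
theorem stmt4 (F₁ F₂ : Measure ℝ) [IsProbabilityMeasure F₁] [IsProbabilityMeasure F₂]
    (h₁ : 0 < acMass F₁) (h₂ : 0 < acMass F₂) :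
    ∃ (a u θ : ℝ) (H : Measure ℝ), 0 < a ∧ θ ∈ Set.Ioc (0 : ℝ) 1 ∧
      IsProbabilityMeasure H ∧
      F₁.conv F₂
        = ENNReal.ofReal (1 - θ) • H
          + ENNReal.ofReal θ • ((triMeasure a).conv (Measure.dirac u)) := by
  obtain ⟨c₁, hc₁, hA₁⟩ := exists_volume_setOf_le_rnDeriv_ne_zero h₁
  obtain ⟨c₂, hc₂, hA₂⟩ := exists_volume_setOf_le_rnDeriv_ne_zero h₂
  obtain ⟨x₁, hx₁⟩ :=
    exists_eventually_ofReal_mul_lt_volume_inter_Icc hA₁ (t := 3 / 4) (by norm_num)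
  obtain ⟨x₂, hx₂⟩ :=
    exists_eventually_ofReal_mul_lt_volume_inter_Icc hA₂ (t := 3 / 4) (by norm_num)
  obtain ⟨r, ⟨hr₁, hr₂⟩, hr : 0 < r⟩ := ((hx₁.and hx₂).and self_mem_nhdsWithin).exists
  set θ := min (c₁ * c₂ * r ^ 2) (1 / 2)
  have hθ₀ : 0 < θ := lt_min (by positivity) (by norm_num)
  have hθ₁ : θ < 1 := (min_le_right _ _).trans_lt (by norm_num)
  have hle : ENNReal.ofReal θ • (triMeasure r).conv (Measure.dirac (x₁ + x₂)) ≤ F₁.conv F₂ :=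
    calc _ ≤ ENNReal.ofReal (c₁ * c₂ * r ^ 2) • (triMeasure r).conv (Measure.dirac (x₁ + x₂)) := by
          gcongr
          exact min_le_left _ _
      _ ≤ F₁.conv F₂ := smul_triMeasure_conv_dirac_le_conv hc₁.le hc₂.le hr hr₁.le hr₂.le
  have := isProbabilityMeasure_triMeasure hr
  obtain ⟨H, hH, hconv⟩ := exists_isProbabilityMeasure_eq_smul_add_smul hθ₀.le hθ₁ hle
  exact ⟨r, x₁ + x₂, θ, H, hr, ⟨hθ₀, hθ₁.le⟩, hH, hconv⟩
end

section
/- Let X be a random variable on a probability space (Ω, 𝒢, P) with finite second moment, let A ∈ 𝒢 be any event, and let ℱ ⊆ 𝒢 be a sub-σ-algebra. Then, almost surely, Var(X | ℱ) ≥ Var( X·1_A + (E(X·1_A | ℱ)/P(A | ℱ))·1_{A^c} | ℱ ), where the convention 0/0 = 0 is used in the ratio E(X·1_A | ℱ)/P(A | ℱ). -/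
open MeasureTheory

/-- The conditional variance `Var(X | m) = E(X² | m) - (E(X | m))²`. -/
noncomputable def condVar {Ω : Type*} {m0 : MeasurableSpace Ω} (m : MeasurableSpace Ω)
    (X : Ω → ℝ) (P : @Measure Ω m0) : Ω → ℝ :=
  fun ω => (P[fun ω' => X ω' ^ 2 | m]) ω - ((P[X | m]) ω) ^ 2

/-!
Write `p = P(A|ℱ)`, `q = P(Aᶜ|ℱ)`, `m' = E(X·1_{Aᶜ}|ℱ)`, `s' = E(X²·1_{Aᶜ}|ℱ)` and
`c = E(X·1_A|ℱ)/p`, and let `Y = X·1_A + c·1_{Aᶜ}`. Being `ℱ`-measurable, `c` pulls out of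
conditional expectations, so where `p > 0` we get `E(Y|ℱ) = c` and
`Var(X|ℱ) - Var(Y|ℱ) = s' - m'² - 2cpm' + c²pq`; multiplied by `q` this is at least
`p(m' - cq)² ≥ 0` by the conditional Cauchy–Schwarz inequality `m'² ≤ s'q`. Where `p = 0`,
Cauchy–Schwarz forces `E(X·1_A|ℱ) = 0` as well. If `Y ∉ L²`, then `E(Y²|ℱ) = 0` by convention,
so `Var(Y|ℱ) ≤ 0 ≤ Var(X|ℱ)`.
-/

open Filter

/-- The pointwise form of the inequality, with `s = E(X²·1_A|ℱ)` and `m = E(X·1_A|ℱ)`. -/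
lemma add_sq_div_mul_sub_sq_le {s s' m m' p q : ℝ} (hm : m ^ 2 ≤ s * p) (hm' : m' ^ 2 ≤ s' * q)
    (hpq : p + q = 1) (hp : 0 ≤ p) (hq : 0 ≤ q) (hs' : 0 ≤ s') :
    s + (m / p) ^ 2 * q - (m + m / p * q) ^ 2 ≤ s + s' - (m + m') ^ 2 := by
  obtain rfl : q = 1 - p := by linarith
  rcases hp.eq_or_lt with rfl | hp
  · obtain rfl : m = 0 := by nlinarith
    nlinarith
  obtain ⟨c, rfl⟩ : ∃ c, m = c * p := ⟨m / p, (div_mul_cancel₀ m hp.ne').symm⟩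
  rw [mul_div_cancel_right₀ c hp.ne']
  rcases hq.eq_or_lt with hq | hq
  · obtain rfl : m' = 0 := by nlinarith
    nlinarith
  have hD : 0 ≤ s' - m' ^ 2 - 2 * c * p * m' + c ^ 2 * p * (1 - p) := by
    refine (mul_nonneg_iff_of_pos_left hq).1 ?_
    nlinarith [mul_nonneg hp.le (sq_nonneg (m' - c * (1 - p)))]
  nlinarith

section CondExp

variable {Ω : Type*} {m m₀ : MeasurableSpace Ω} {μ : Measure[m₀] Ω}

lemma sq_condExp_mul_le {Z W : Ω → ℝ} (hZ : MemLp Z 2 μ) (hW : MemLp W 2 μ) :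
    ∀ᵐ ω ∂μ, (μ[fun ω => Z ω * W ω | m] ω) ^ 2
      ≤ μ[fun ω => Z ω ^ 2 | m] ω * μ[fun ω => W ω ^ 2 | m] ω := by
  have hZW : Integrable (fun ω => Z ω * W ω) μ := hZ.integrable_mul hW
  -- Only countably many `t`, so that the exceptional null sets can be collected; ℚ is dense.
  have hquad : ∀ t : ℚ, ∀ᵐ ω ∂μ, 0 ≤ μ[fun ω => W ω ^ 2 | m] ω * (t * t)
      + (-2 * μ[fun ω => Z ω * W ω | m] ω) * t + μ[fun ω => Z ω ^ 2 | m] ω := by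
    intro t
    have hexpand : (fun ω => (Z ω - t * W ω) ^ 2) = (fun ω => Z ω ^ 2)
        + (-2 * (t : ℝ)) • (fun ω => Z ω * W ω) + ((t : ℝ) ^ 2) • (fun ω => W ω ^ 2) := by
      ext ω; simp only [Pi.add_apply, Pi.smul_apply, smul_eq_mul]; ring
    have hnonneg : 0 ≤ᵐ[μ] μ[fun ω => (Z ω - t * W ω) ^ 2 | m] :=
      condExp_nonneg (.of_forall fun ω => sq_nonneg _)
    rw [hexpand] at hnonneg
    filter_upwards [hnonneg, condExp_add (hZ.integrable_sq.add (hZW.smul (-2 * (t : ℝ))))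
      (hW.integrable_sq.smul ((t : ℝ) ^ 2)) m,
      condExp_add hZ.integrable_sq (hZW.smul (-2 * (t : ℝ))) m,
      condExp_smul (-2 * (t : ℝ)) (fun ω => Z ω * W ω) m,
      condExp_smul ((t : ℝ) ^ 2) (fun ω => W ω ^ 2) m] with ω h h₁ h₂ h₃ h₄
    simp only [h₁, h₂, h₃, h₄, Pi.add_apply, Pi.smul_apply, smul_eq_mul, Pi.zero_apply] at h
    linarith
  filter_upwards [ae_all_iff.2 hquad] with ω h
  have hreal : ∀ t : ℝ, 0 ≤ μ[fun ω => W ω ^ 2 | m] ω * (t * t)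
      + (-2 * μ[fun ω => Z ω * W ω | m] ω) * t + μ[fun ω => Z ω ^ 2 | m] ω := fun t =>
    Rat.denseRange_cast.induction_on t (isClosed_le continuous_const (by fun_prop)) h
  have hdiscrim := discrim_le_zero hreal
  rw [discrim] at hdiscrim
  nlinarith

lemma condExp_indicator_add_indicator_compl {f : Ω → ℝ} {S : Set Ω} (hS : MeasurableSet S)
    (hf : Integrable f μ) : μ[f | m] =ᵐ[μ] μ[S.indicator f | m] + μ[Sᶜ.indicator f | m] := by
  conv_lhs => rw [← S.indicator_self_add_compl f]
  exact condExp_add (hf.indicator hS) (hf.indicator hS.compl) m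

lemma condVar_nonpos_of_not_integrable_sq {Y : Ω → ℝ} (hY : ¬Integrable (fun ω => Y ω ^ 2) μ)
    (ω : Ω) : condVar m Y μ ω ≤ 0 := by
  simp only [condVar, condExp_of_not_integrable hY, Pi.zero_apply, zero_sub, neg_nonpos]
  positivity

variable [IsFiniteMeasure μ]

lemma sq_condExp_indicator_le {f : Ω → ℝ} {S : Set Ω} (hS : MeasurableSet S) (hf : MemLp f 2 μ) :
    ∀ᵐ ω ∂μ, (μ[S.indicator f | m] ω) ^ 2 ≤
      μ[S.indicator (fun ω => f ω ^ 2) | m] ω * μ[S.indicator (fun _ => (1 : ℝ)) | m] ω := by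
  have h := sq_condExp_mul_le (m := m) (hf.indicator hS) ((memLp_const (1 : ℝ)).indicator hS)
  have e₁ : (fun ω => S.indicator f ω * S.indicator (fun _ => (1 : ℝ)) ω) = S.indicator f := by
    ext ω; by_cases hω : ω ∈ S <;> simp [hω]
  have e₂ : (fun ω => S.indicator f ω ^ 2) = S.indicator (fun ω => f ω ^ 2) := by
    ext ω; by_cases hω : ω ∈ S <;> simp [hω]
  have e₃ : (fun ω => S.indicator (fun _ => (1 : ℝ)) ω ^ 2) = S.indicator (fun _ => (1 : ℝ)) := by
    ext ω; by_cases hω : ω ∈ S <;> simp [hω]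
  rwa [e₁, e₂, e₃] at h

lemma condExp_indicator_add_mul_indicator_compl {f g : Ω → ℝ} {S : Set Ω} (hS : MeasurableSet S)
    (hf : Integrable f μ) (hg : StronglyMeasurable[m] g)
    (hint : Integrable (fun ω => S.indicator f ω + g ω * Sᶜ.indicator (fun _ => (1 : ℝ)) ω) μ) :
    μ[fun ω => S.indicator f ω + g ω * Sᶜ.indicator (fun _ => (1 : ℝ)) ω | m]
      =ᵐ[μ] μ[S.indicator f | m] + g * μ[Sᶜ.indicator (fun _ => (1 : ℝ)) | m] := by
  have hg' : Integrable (g * Sᶜ.indicator (fun _ => (1 : ℝ))) μ :=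
    (hint.sub (hf.indicator hS)).congr (.of_forall fun ω => by simp)
  exact (condExp_add (hf.indicator hS) hg' m).trans
    (EventuallyEq.rfl.add (condExp_mul_of_stronglyMeasurable_left hg hg'
      ((integrable_const 1).indicator hS.compl)))

lemma condVar_nonneg (hm : m ≤ m₀) {X : Ω → ℝ} (hX : MemLp X 2 μ) :
    ∀ᵐ ω ∂μ, 0 ≤ condVar m X μ ω := by
  filter_upwards [ProbabilityTheory.condVar_ae_eq_condExp_sq_sub_sq_condExp hm hX,
    condExp_nonneg (m := m) (f := (X - μ[X | m]) ^ 2) (.of_forall fun ω => sq_nonneg _)]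
    with ω h h₀
  exact h₀.trans_eq h

lemma condVar_indicator_add_div_mul_indicator_compl_le (hm : m ≤ m₀) {X : Ω → ℝ}
    (hX : MemLp X 2 μ) {A : Set Ω} (hA : MeasurableSet A)
    (hY : Integrable (fun ω => (A.indicator X ω + μ[A.indicator X | m] ω
      / μ[A.indicator (fun _ => (1 : ℝ)) | m] ω * Aᶜ.indicator (fun _ => (1 : ℝ)) ω) ^ 2) μ) :
    ∀ᵐ ω ∂μ, condVar m (fun ω => A.indicator X ω + μ[A.indicator X | m] ω
      / μ[A.indicator (fun _ => (1 : ℝ)) | m] ω * Aᶜ.indicator (fun _ => (1 : ℝ)) ω) μ ω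
        ≤ condVar m X μ ω := by
  set c : Ω → ℝ := fun ω => μ[A.indicator X | m] ω / μ[A.indicator (fun _ => (1 : ℝ)) | m] ω
  have hc : StronglyMeasurable[m] c := (stronglyMeasurable_condExp.measurable.div
    stronglyMeasurable_condExp.measurable).stronglyMeasurable
  have hsq : (fun ω => (A.indicator X ω + c ω * Aᶜ.indicator (fun _ => (1 : ℝ)) ω) ^ 2)
      = fun ω => A.indicator (fun ω => X ω ^ 2) ω + c ω ^ 2 * Aᶜ.indicator (fun _ => (1 : ℝ)) ω := by
    ext ω; by_cases hω : ω ∈ A <;> simp [hω]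
  have hYmeas : AEStronglyMeasurable
      (fun ω => A.indicator X ω + c ω * Aᶜ.indicator (fun _ => (1 : ℝ)) ω) μ :=
    (hX.indicator hA).1.add
      ((hc.mono hm).mul (stronglyMeasurable_const.indicator hA.compl)).aestronglyMeasurable
  have hEY := condExp_indicator_add_mul_indicator_compl (m := m) hA (hX.integrable one_le_two) hc
    (((memLp_two_iff_integrable_sq hYmeas).2 hY).integrable one_le_two)
  have hEY2 := condExp_indicator_add_mul_indicator_compl (m := m) hA hX.integrable_sq
    (g := fun ω => c ω ^ 2) (hc.pow 2) (hsq ▸ hY)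
  rw [← hsq] at hEY2
  have hone := condExp_indicator_add_indicator_compl (m := m) hA (integrable_const (μ := μ) (1 : ℝ))
  rw [condExp_const hm] at hone
  filter_upwards [hEY, hEY2, hone,
    condExp_indicator_add_indicator_compl (m := m) hA (hX.integrable one_le_two),
    condExp_indicator_add_indicator_compl (m := m) hA hX.integrable_sq,
    sq_condExp_indicator_le (m := m) hA hX, sq_condExp_indicator_le (m := m) hA.compl hX,
    condExp_nonneg (m := m) (f := A.indicator fun _ => (1 : ℝ))
      (.of_forall (Set.indicator_nonneg fun _ _ => zero_le_one)),
    condExp_nonneg (m := m) (f := Aᶜ.indicator fun _ => (1 : ℝ))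
      (.of_forall (Set.indicator_nonneg fun _ _ => zero_le_one)),
    condExp_nonneg (m := m) (f := Aᶜ.indicator fun ω => X ω ^ 2)
      (.of_forall (Set.indicator_nonneg fun ω _ => sq_nonneg (X ω)))]
    with ω hEYω hEY2ω hpq hEXω hEX2ω hCS hCS' hp hq hs'
  simp only [condVar, Pi.add_apply, Pi.mul_apply] at hEYω hEY2ω hEXω hEX2ω ⊢
  rw [hEYω, hEY2ω, hEXω, hEX2ω]
  exact add_sq_div_mul_sub_sq_le hCS hCS' hpq.symm hp hq hs'

end CondExp

/-- For any event `A` and sub-σ-algebra `ℱ`, almost surely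
`Var(X | ℱ) ≥ Var(X·1_A + (E(X·1_A|ℱ)/P(A|ℱ))·1_{Aᶜ} | ℱ)`, with the convention `0/0 = 0`
(Lean's division by zero yields `0`). -/
theorem stmt8 {Ω : Type*} [𝒢 : MeasurableSpace Ω] (P : Measure Ω) [IsProbabilityMeasure P]
    (X : Ω → ℝ) (hX : MemLp X 2 P) (A : Set Ω) (hA : MeasurableSet A)
    (ℱ : MeasurableSpace Ω) (hℱ : ℱ ≤ 𝒢) :
    ∀ᵐ ω ∂P,
      condVar ℱ (fun ω' =>
          A.indicator X ω'
            + (P[A.indicator X | ℱ]) ω' / (P[A.indicator (fun _ => (1 : ℝ)) | ℱ]) ω'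
              * Aᶜ.indicator (fun _ => (1 : ℝ)) ω') P ω
        ≤ condVar ℱ X P ω := by
  by_cases hY : Integrable (fun ω => (A.indicator X ω + P[A.indicator X | ℱ] ω
      / P[A.indicator (fun _ => (1 : ℝ)) | ℱ] ω * Aᶜ.indicator (fun _ => (1 : ℝ)) ω) ^ 2) P
  · exact condVar_indicator_add_div_mul_indicator_compl_le hℱ hX hA hY
  · filter_upwards [condVar_nonneg hℱ hX] with ω hω
    exact (condVar_nonpos_of_not_integrable_sq hY ω).trans hω
end

section
/- Let (Ω, 𝒢, P) be a probability space, let Y be an integrable random variable, let A ∈ 𝒢 with P(A) > 0, and let ℱ ⊆ 𝒢 be a sub-σ-algebra. Then, P-almost surely, E( 1_A · E_A(Y | ℱ) | ℱ ) = E( 1_A · Y | ℱ ), where E_A(· | ℱ) denotes conditional expectation with respect to ℱ under the conditional probability measure P(· | A). -/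
/-!
Since `P(· | A) = P(A)⁻¹ • P|_A`, for every `ℱ`-measurable `s` we have
`∫_s 1_A · g dP = P(A) ∫_s g dP(· | A)`. The defining property of `E_A(Y | ℱ)` therefore says that
`1_A · E_A(Y | ℱ)` and `1_A · Y` have the same integral over every `ℱ`-measurable set, so they
have the same conditional expectation given `ℱ` under `P`.
-/

open MeasureTheory ProbabilityTheory

namespace ProbabilityTheory

variable {Ω : Type*} {m m₀ : MeasurableSpace Ω} {μ : Measure Ω} {s : Set Ω} {f : Ω → ℝ}

lemma restrict_eq_smul_cond (hs₀ : μ s ≠ 0) (hs : μ s ≠ ⊤) : μ.restrict s = μ s • μ[|s] := by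
  rw [cond, smul_smul, ENNReal.mul_inv_cancel hs₀ hs, one_smul]

lemma integrable_cond_of_integrable (hf : Integrable f μ) (hs₀ : μ s ≠ 0) :
    Integrable f μ[|s] :=
  hf.restrict.smul_measure (ENNReal.inv_ne_top.2 hs₀)

lemma integrable_indicator_of_integrable_cond (hs : MeasurableSet s) (hs₀ : μ s ≠ 0)
    (hs_top : μ s ≠ ⊤) (hf : Integrable f μ[|s]) : Integrable (s.indicator f) μ := by
  rw [integrable_indicator_iff hs, IntegrableOn, restrict_eq_smul_cond hs₀ hs_top]
  exact hf.smul_measure hs_top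

lemma setIntegral_indicator_eq_mul_setIntegral_cond (hs : MeasurableSet s) (hs₀ : μ s ≠ 0)
    (hs_top : μ s ≠ ⊤) {t : Set Ω} (ht : MeasurableSet t) :
    ∫ x in t, s.indicator f x ∂μ = (μ s).toReal * ∫ x in t, f x ∂μ[|s] := by
  rw [setIntegral_indicator hs, ← Measure.restrict_restrict ht, restrict_eq_smul_cond hs₀ hs_top,
    Measure.restrict_smul, integral_smul_measure, smul_eq_mul]

theorem condExp_indicator_condExp_cond (hm : m ≤ m₀) [SigmaFinite (μ.trim hm)]
    (hs : MeasurableSet s) (hs₀ : μ s ≠ 0) (hs_top : μ s ≠ ⊤) (hf : Integrable f μ[|s]) :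
    μ[s.indicator (μ[|s][f | m]) | m] =ᵐ[μ] μ[s.indicator f | m] := by
  -- makes `μ[|s].trim hm` σ-finite, as needed for `setIntegral_condExp` under `μ[|s]`
  have : IsProbabilityMeasure μ[|s] := cond_isProbabilityMeasure_of_finite hs₀ hs_top
  have hg : Integrable (s.indicator (μ[|s][f | m])) μ :=
    integrable_indicator_of_integrable_cond hs hs₀ hs_top integrable_condExp
  refine ae_eq_condExp_of_forall_setIntegral_eq hm
    (integrable_indicator_of_integrable_cond hs hs₀ hs_top hf)
    (fun t _ _ ↦ integrable_condExp.integrableOn) (fun t ht _ ↦ ?_)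
    stronglyMeasurable_condExp.aestronglyMeasurable
  rw [setIntegral_condExp hm hg ht, setIntegral_indicator_eq_mul_setIntegral_cond hs hs₀ hs_top
      (hm t ht), setIntegral_indicator_eq_mul_setIntegral_cond hs hs₀ hs_top (hm t ht),
    setIntegral_condExp hm hf ht]

end ProbabilityTheory

/-- For an integrable `Y`, an event `A` with `P(A) > 0`, and a sub-σ-algebra `ℱ`, almost surely
`E(1_A · E_A(Y|ℱ) | ℱ) = E(1_A · Y | ℱ)`, where `E_A(·|ℱ)` is conditional expectation with
respect to `ℱ` under the conditional probability measure `P(·|A)`. -/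
theorem stmt9 {Ω : Type*} [𝒢 : MeasurableSpace Ω] (P : Measure Ω) [IsProbabilityMeasure P]
    (Y : Ω → ℝ) (hY : Integrable Y P) (A : Set Ω) (hA : MeasurableSet A) (hApos : 0 < P A)
    (ℱ : MeasurableSpace Ω) (hℱ : ℱ ≤ 𝒢) :
    ∀ᵐ ω ∂P,
      (P[fun ω' => A.indicator (fun _ => (1 : ℝ)) ω' * ((P[|A])[Y | ℱ]) ω' | ℱ]) ω
        = (P[A.indicator Y | ℱ]) ω := by
  simp_rw [← Set.indicator_mul_left, one_mul]
  exact condExp_indicator_condExp_cond hℱ hA hApos.ne' (measure_ne_top P A)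
    (integrable_cond_of_integrable hY hApos.ne')
end

section
/- Let (Ω, 𝒢, P) be a probability space, let Y be an integrable random variable, let A ∈ 𝒢 with P(A) > 0, and let ℱ ⊆ 𝒢 be a sub-σ-algebra. Then, P-almost surely, ( E(1_A · Y | ℱ) / P(A | ℱ) ) · 1_A = E_A(Y | ℱ) · 1_A, where the convention 0/0 = 0 is used and E_A(· | ℱ) denotes conditional expectation with respect to ℱ under the conditional probability measure P(· | A). -/
open MeasureTheory ProbabilityTheory

/-! The pull-out property gives `E_A(Y | ℱ) · P(A | ℱ) = E(1_A · E_A(Y | ℱ) | ℱ)`, and the identity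
`∫_s 1_A f dP = P(A) ∫_s f dP(· | A)` turns the defining property of `E_A(Y | ℱ)` into that of
`E(1_A · Y | ℱ)`, so `E_A(Y | ℱ) · P(A | ℱ) = E(1_A · Y | ℱ)`. It remains to divide on `A`, where
`P(A | ℱ) ≠ 0` a.s.: on the `ℱ`-set `{P(A | ℱ) = 0}` the indicator of `A` integrates to zero. -/

section

variable {Ω : Type*} {m mΩ : MeasurableSpace Ω} {μ : Measure Ω} {A : Set Ω}

theorem integrable_cond_iff {f : Ω → ℝ} (hA₀ : μ A ≠ 0) (hA : μ A ≠ ⊤) :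
    Integrable f μ[|A] ↔ IntegrableOn f A μ :=
  integrable_inv_smul_measure hA₀ hA

theorem integrable_indicator_condExp_cond [IsFiniteMeasure μ] (hA : MeasurableSet A)
    (hA₀ : μ A ≠ 0) {Y : Ω → ℝ} : Integrable (A.indicator (μ[|A][Y | m])) μ :=
  (integrable_indicator_iff hA).mpr <|
    (integrable_cond_iff hA₀ (measure_ne_top μ A)).mp integrable_condExp

theorem setIntegral_indicator_eq_measureReal_mul_setIntegral_cond [IsFiniteMeasure μ]
    (hA : MeasurableSet A) {s : Set Ω} (hs : MeasurableSet s) (f : Ω → ℝ) :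
    ∫ ω in s, A.indicator f ω ∂μ = μ.real A * ∫ ω in s, f ω ∂μ[|A] := by
  rcases eq_or_ne (μ A) 0 with hA₀ | hA₀
  · simp [hA₀, measureReal_def, setIntegral_indicator hA, Measure.restrict_eq_zero.mpr
      (measure_mono_null Set.inter_subset_right hA₀)]
  · rw [setIntegral_indicator hA, ProbabilityTheory.cond, Measure.restrict_smul,
      Measure.restrict_restrict hs, integral_smul_measure, ENNReal.toReal_inv, smul_eq_mul,
      ← mul_assoc, measureReal_def,
      mul_inv_cancel₀ (ENNReal.toReal_ne_zero.mpr ⟨hA₀, measure_ne_top μ A⟩), one_mul]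

theorem condExp_indicator_ae_eq_mul_condExp_indicator_one [IsFiniteMeasure μ] {Z : Ω → ℝ}
    (hZ : StronglyMeasurable[m] Z) (hZA : Integrable (A.indicator Z) μ) (hA : MeasurableSet A) :
    μ[A.indicator Z | m] =ᵐ[μ] Z * μ[A.indicator 1 | m] := by
  have hmul : A.indicator Z = Z * A.indicator 1 := by
    ext ω
    simpa using Set.indicator_mul_right (i := ω) A Z 1
  rw [hmul] at hZA ⊢
  exact condExp_mul_of_stronglyMeasurable_left hZ hZA ((integrable_const 1).indicator hA)

theorem condExp_indicator_condExp_cond_ae_eq [IsFiniteMeasure μ] (hm : m ≤ mΩ)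
    (hA : MeasurableSet A) (hA₀ : μ A ≠ 0) {Y : Ω → ℝ} (hY : Integrable Y μ) :
    μ[A.indicator (μ[|A][Y | m]) | m] =ᵐ[μ] μ[A.indicator Y | m] := by
  have hYA : Integrable Y μ[|A] :=
    (integrable_cond_iff hA₀ (measure_ne_top μ A)).mpr hY.integrableOn
  refine ae_eq_condExp_of_forall_setIntegral_eq hm (hY.indicator hA)
    (fun s _ _ => integrable_condExp.integrableOn) (fun s hs _ => ?_)
    stronglyMeasurable_condExp.aestronglyMeasurable
  rw [setIntegral_condExp hm (integrable_indicator_condExp_cond hA hA₀) hs,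
    setIntegral_indicator_eq_measureReal_mul_setIntegral_cond hA (hm s hs),
    setIntegral_indicator_eq_measureReal_mul_setIntegral_cond hA (hm s hs),
    setIntegral_condExp hm hYA hs]

theorem condExp_cond_mul_condExp_indicator_one_ae_eq [IsFiniteMeasure μ] (hm : m ≤ mΩ)
    (hA : MeasurableSet A) (hA₀ : μ A ≠ 0) {Y : Ω → ℝ} (hY : Integrable Y μ) :
    μ[|A][Y | m] * μ[A.indicator 1 | m] =ᵐ[μ] μ[A.indicator Y | m] :=
  (condExp_indicator_ae_eq_mul_condExp_indicator_one stronglyMeasurable_condExp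
    (integrable_indicator_condExp_cond hA hA₀) hA).symm.trans
    (condExp_indicator_condExp_cond_ae_eq hm hA hA₀ hY)

theorem ae_imp_eq_zero_of_condExp_eq_zero [IsFiniteMeasure μ] (hm : m ≤ mΩ) {f : Ω → ℝ}
    (hf : Integrable f μ) (hf₀ : 0 ≤ᵐ[μ] f) :
    ∀ᵐ ω ∂μ, μ[f | m] ω = 0 → f ω = 0 := by
  set s := {ω | μ[f | m] ω = 0}
  have hs : MeasurableSet[m] s :=
    stronglyMeasurable_condExp.measurable (measurableSet_singleton 0)
  have hfs : ∫ ω in s, f ω ∂μ = 0 := by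
    rw [← setIntegral_condExp hm hf hs, setIntegral_congr_fun (hm s hs) fun ω hω => hω,
      integral_zero]
  rw [integral_eq_zero_iff_of_nonneg_ae (ae_restrict_of_ae hf₀) hf.integrableOn] at hfs
  exact (ae_restrict_iff' (hm s hs)).mp hfs

end

/-- For an integrable `Y`, an event `A` with `P(A) > 0`, and a sub-σ-algebra `ℱ`, almost surely
`(E(1_A·Y | ℱ) / P(A | ℱ))·1_A = E_A(Y | ℱ)·1_A`, with the convention `0/0 = 0` (Lean's
division by zero yields `0`), where `E_A(·|ℱ)` is conditional expectation with respect to `ℱ`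
under the conditional probability measure `P(·|A)`. -/
theorem stmt10 {Ω : Type*} [𝒢 : MeasurableSpace Ω] (P : Measure Ω) [IsProbabilityMeasure P]
    (Y : Ω → ℝ) (hY : Integrable Y P) (A : Set Ω) (hA : MeasurableSet A) (hApos : 0 < P A)
    (ℱ : MeasurableSpace Ω) (hℱ : ℱ ≤ 𝒢) :
    ∀ᵐ ω ∂P,
      (P[A.indicator Y | ℱ]) ω / (P[A.indicator (fun _ => (1 : ℝ)) | ℱ]) ω
          * A.indicator (fun _ => (1 : ℝ)) ω
        = ((P[|A])[Y | ℱ]) ω * A.indicator (fun _ => (1 : ℝ)) ω := by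
  filter_upwards [condExp_cond_mul_condExp_indicator_one_ae_eq hℱ hA hApos.ne' hY,
    ae_imp_eq_zero_of_condExp_eq_zero hℱ ((integrable_const 1).indicator hA)
      (ae_of_all _ (Set.indicator_nonneg fun _ _ => zero_le_one))]
    with ω hprod hpos
  by_cases hω : ω ∈ A
  · have hW : P[A.indicator (1 : Ω → ℝ) | ℱ] ω ≠ 0 := fun h => by simpa [hω] using hpos h
    simp only [Set.indicator_of_mem hω, mul_one]
    rw [← hprod]
    exact mul_div_cancel_right₀ _ hW
  · simp [hω]
end

section
/- Let F_{μ,σ} denote the distribution of the normal law N(μ, σ²) on ℝ. Then for all μ₁, μ₂ ∈ ℝ and all σ₁, σ₂ > 0, d_TV(F_{μ₁,σ₁}, F_{μ₂,σ₂}) ≤ √(2/π) · ( |μ₁ − μ₂| / (2·max(σ₁, σ₂)) + max(σ₁, σ₂)/min(σ₁, σ₂) − 1 ). -/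
/-!
Both laws have densities with total mass one, so `d_TV` is at most half the `L¹` distance of
the densities. Going from `N(μ₁, σ₁²)` to `N(μ₂, σ₂²)` with `σ₁ ≤ σ₂`, first change the scale
and then the mean; along each segment the `L¹` distance is at most the length of the segment
times a bound for the `L¹` norm of the derivative of the density in the parameter. Each such
derivative is an `x`-derivative, hence integrates to zero, so its `L¹` norm is twice the integral
of its negative part. For the mean this is exactly `2 / (√(2π) σ) = √(2/π) / σ`; for the
standard deviation `t` the negative part lives on `|x - m| ≤ t` and is at most `1 / (√(2π) t²)`
there, which gives `2 √(2/π) / t`.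
-/

open MeasureTheory ProbabilityTheory Real Set Filter Topology

noncomputable def tvDist (μ ν : Measure ℝ) : ℝ :=
  ⨆ A : {s : Set ℝ // MeasurableSet s}, |(μ A.1).toReal - (ν A.1).toReal|

lemma tvDist_comm (μ ν : Measure ℝ) : tvDist μ ν = tvDist ν μ := by
  simp only [tvDist, abs_sub_comm]

section L1

variable {α : Type*} [MeasurableSpace α] {μ : Measure α}

lemma integral_abs_eq_two_mul_integral_negPart {f : α → ℝ} (hf : Integrable f μ)
    (h₀ : ∫ x, f x ∂μ = 0) : ∫ x, |f x| ∂μ = 2 * ∫ x, max (-f x) 0 ∂μ := by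
  have habs : (fun x => |f x|) = fun x => f x + 2 * max (-f x) 0 := by
    funext x
    rcases le_total 0 (f x) with h | h
    · simp [abs_of_nonneg h, h]
    · rw [abs_of_nonpos h, max_eq_left (neg_nonneg.mpr h)]; ring
  rw [habs, integral_add hf (hf.neg_part.const_mul 2), integral_const_mul, h₀, zero_add]

lemma abs_setIntegral_sub_le_half_integral_abs_sub {f g : α → ℝ} (hf : Integrable f μ)
    (hg : Integrable g μ) (h : ∫ x, f x ∂μ = ∫ x, g x ∂μ) {A : Set α} (hA : MeasurableSet A) :
    |∫ x in A, f x ∂μ - ∫ x in A, g x ∂μ| ≤ (∫ x, |f x - g x| ∂μ) / 2 := by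
  have hd : Integrable (fun x => f x - g x) μ := hf.sub hg
  rw [← integral_sub hf.integrableOn hg.integrableOn]
  have hcompl : ∫ x in Aᶜ, (f x - g x) ∂μ = -∫ x in A, (f x - g x) ∂μ := by
    have := integral_add_compl hA hd
    rw [integral_sub hf hg, h, sub_self] at this
    linarith
  have hA_le := abs_integral_le_integral_abs (μ := μ.restrict A) (f := fun x => f x - g x)
  have hAc_le := abs_integral_le_integral_abs (μ := μ.restrict Aᶜ) (f := fun x => f x - g x)
  rw [hcompl, abs_neg] at hAc_le
  have := integral_add_compl hA hd.abs
  linarith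

lemma integral_abs_sub_le_add {f g h : α → ℝ} (hf : Integrable f μ) (hg : Integrable g μ)
    (hh : Integrable h μ) :
    ∫ x, |f x - h x| ∂μ ≤ ∫ x, |f x - g x| ∂μ + ∫ x, |g x - h x| ∂μ := by
  have hfg : Integrable (fun x => |f x - g x|) μ := (hf.sub hg).abs
  have hgh : Integrable (fun x => |g x - h x|) μ := (hg.sub hh).abs
  rw [← integral_add hfg hgh]
  exact integral_mono (hf.sub hh).abs (hfg.add hgh) fun x => abs_sub_le _ _ _

lemma integral_abs_sub_le_of_hasDerivAt [SFinite μ] {F D : ℝ → α → ℝ} {a b C : ℝ}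
    (hab : a ≤ b) (hF : ∀ x, ∀ t ∈ Icc a b, HasDerivAt (F · x) (D t x) t)
    (hD_cont : ∀ x, ContinuousOn (D · x) (Icc a b)) (hD_meas : Measurable (Function.uncurry D))
    (hD_int : ∀ t ∈ Icc a b, Integrable (D t) μ) (hD_le : ∀ t ∈ Icc a b, ∫ x, |D t x| ∂μ ≤ C)
    (hF_int : Integrable (fun x => F b x - F a x) μ) :
    ∫ x, |F b x - F a x| ∂μ ≤ C * (b - a) := by
  have hC : 0 ≤ C := (integral_nonneg fun _ => abs_nonneg _).trans (hD_le a ⟨le_rfl, hab⟩)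
  have hFTC : ∀ x, ENNReal.ofReal |F b x - F a x| ≤ ∫⁻ t in Ioc a b, ‖D t x‖ₑ := by
    intro x
    have hint : ∫ t in a..b, D t x = F b x - F a x :=
      intervalIntegral.integral_eq_sub_of_hasDerivAt
        (fun t ht => hF x t (by rwa [uIcc_of_le hab] at ht))
        ((hD_cont x).intervalIntegrable_of_Icc hab)
    rw [← hint, intervalIntegral.integral_of_le hab, ← Real.norm_eq_abs, ofReal_norm]
    exact enorm_integral_le_lintegral_enorm _
  have hswap : ∫⁻ x, (∫⁻ t in Ioc a b, ‖D t x‖ₑ) ∂μ ≤ ENNReal.ofReal (C * (b - a)) := by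
    rw [lintegral_lintegral_swap (hD_meas.comp measurable_swap).enorm.aemeasurable]
    calc ∫⁻ t in Ioc a b, (∫⁻ x, ‖D t x‖ₑ ∂μ) ≤ ∫⁻ _ in Ioc a b, ENNReal.ofReal C := by
          refine setLIntegral_mono measurable_const fun t ht => ?_
          rw [← ofReal_integral_norm_eq_lintegral_enorm (hD_int t ⟨ht.1.le, ht.2⟩)]
          exact ENNReal.ofReal_le_ofReal (hD_le t ⟨ht.1.le, ht.2⟩)
      _ = ENNReal.ofReal (C * (b - a)) := by
          rw [setLIntegral_const, Real.volume_Ioc, ← ENNReal.ofReal_mul hC]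
  rw [integral_eq_lintegral_of_nonneg_ae (ae_of_all _ fun _ => abs_nonneg _)
    hF_int.abs.aestronglyMeasurable]
  exact ENNReal.toReal_le_of_le_ofReal (mul_nonneg hC (sub_nonneg.mpr hab))
    ((lintegral_mono hFTC).trans hswap)

end L1

noncomputable def normalDensity (m s x : ℝ) : ℝ :=
  (√(2 * π))⁻¹ * s⁻¹ * exp (-(x - m) ^ 2 / (2 * s ^ 2))

lemma two_mul_inv_sqrt_two_mul_pi : 2 * (√(2 * π))⁻¹ = √(2 / π) := by
  have h2 : √2 * √2 = 2 := mul_self_sqrt zero_le_two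
  have : √π ≠ 0 := by positivity
  rw [sqrt_div zero_le_two, sqrt_mul zero_le_two, mul_inv]
  field_simp
  linear_combination -h2

lemma gaussianPDFReal_eq_normalDensity (m : ℝ) {s : ℝ} (hs : 0 ≤ s) :
    gaussianPDFReal m ⟨s ^ 2, sq_nonneg s⟩ = normalDensity m s := by
  funext x
  simp only [gaussianPDFReal, normalDensity]
  show (√(2 * π * s ^ 2))⁻¹ * exp (-(x - m) ^ 2 / (2 * s ^ 2)) = _
  rw [sqrt_mul (by positivity), sqrt_sq hs, mul_inv]

lemma normalDensity_pos (m x : ℝ) {s : ℝ} (hs : 0 < s) : 0 < normalDensity m s x := by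
  unfold normalDensity; positivity

lemma integrable_pow_mul_normalDensity (m : ℝ) {s : ℝ} (hs : s ≠ 0) (k : ℕ) :
    Integrable (fun x => (x - m) ^ k * normalDensity m s x) := by
  have hb : 0 < (2 * s ^ 2)⁻¹ := by positivity
  have hk : (-1 : ℝ) < k := by linarith [k.cast_nonneg (α := ℝ)]
  refine (((integrable_rpow_mul_exp_neg_mul_sq hb hk).comp_sub_right m).const_mul
    ((√(2 * π))⁻¹ * s⁻¹)).congr (ae_of_all _ fun x => ?_)
  simp only [normalDensity, rpow_natCast]
  ring_nf

lemma integrable_normalDensity (m : ℝ) {s : ℝ} (hs : s ≠ 0) : Integrable (normalDensity m s) := by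
  simpa using integrable_pow_mul_normalDensity m hs 0

lemma mk_sq_ne_zero {s : ℝ} (hs : s ≠ 0) : (⟨s ^ 2, sq_nonneg s⟩ : NNReal) ≠ 0 :=
  fun h => pow_ne_zero 2 hs (congrArg Subtype.val h)

lemma integral_normalDensity (m : ℝ) {s : ℝ} (hs : 0 < s) : ∫ x, normalDensity m s x = 1 := by
  rw [← gaussianPDFReal_eq_normalDensity m hs.le]
  exact integral_gaussianPDFReal_eq_one m (mk_sq_ne_zero hs.ne')

lemma toReal_gaussianReal_apply (m : ℝ) {s : ℝ} (hs : 0 < s) (A : Set ℝ) :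
    (gaussianReal m ⟨s ^ 2, sq_nonneg s⟩ A).toReal = ∫ x in A, normalDensity m s x := by
  rw [gaussianReal_apply_eq_integral m (mk_sq_ne_zero hs.ne'),
    gaussianPDFReal_eq_normalDensity m hs.le,
    ENNReal.toReal_ofReal (setIntegral_nonneg_of_ae
      (ae_of_all _ fun x => (normalDensity_pos m x hs).le))]

lemma tvDist_gaussianReal_le (m₁ m₂ : ℝ) {s₁ s₂ : ℝ} (hs₁ : 0 < s₁) (hs₂ : 0 < s₂) :
    tvDist (gaussianReal m₁ ⟨s₁ ^ 2, sq_nonneg s₁⟩) (gaussianReal m₂ ⟨s₂ ^ 2, sq_nonneg s₂⟩)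
      ≤ (∫ x, |normalDensity m₁ s₁ x - normalDensity m₂ s₂ x|) / 2 := by
  have : Nonempty {A : Set ℝ // MeasurableSet A} := ⟨⟨∅, .empty⟩⟩
  refine ciSup_le fun A => ?_
  rw [toReal_gaussianReal_apply m₁ hs₁, toReal_gaussianReal_apply m₂ hs₂]
  exact abs_setIntegral_sub_le_half_integral_abs_sub (integrable_normalDensity m₁ hs₁.ne')
    (integrable_normalDensity m₂ hs₂.ne')
    (by rw [integral_normalDensity m₁ hs₁, integral_normalDensity m₂ hs₂]) A.2

lemma hasDerivAt_normalDensity (m : ℝ) {s : ℝ} (hs : s ≠ 0) (x : ℝ) :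
    HasDerivAt (normalDensity m s) (-((x - m) / s ^ 2 * normalDensity m s x)) x := by
  have := ((((hasDerivAt_id x).sub_const m).pow 2).neg.div_const (2 * s ^ 2)).exp.const_mul
    ((√(2 * π))⁻¹ * s⁻¹)
  refine this.congr_deriv ?_
  simp only [Pi.neg_apply, Pi.pow_apply, id, normalDensity]
  field_simp
  ring

lemma hasDerivAt_normalDensity_mean {s : ℝ} (hs : s ≠ 0) (x t : ℝ) :
    HasDerivAt (normalDensity · s x) ((x - t) / s ^ 2 * normalDensity t s x) t := by
  have := ((((hasDerivAt_id t).const_sub x).pow 2).neg.div_const (2 * s ^ 2)).exp.const_mul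
    ((√(2 * π))⁻¹ * s⁻¹)
  refine this.congr_deriv ?_
  simp only [Pi.neg_apply, Pi.pow_apply, id, normalDensity]
  field_simp
  ring

lemma tendsto_normalDensity_atBot (m : ℝ) {s : ℝ} (hs : s ≠ 0) :
    Tendsto (normalDensity m s) atBot (𝓝 0) := by
  have hsq : Tendsto (fun x => (x - m) ^ 2) atBot atTop := by
    have h := tendsto_atBot_add_const_right atBot (-m) tendsto_id
    simpa [sq, sub_eq_add_neg] using h.atBot_mul_atBot₀ h
  have hb : 0 < (2 * s ^ 2)⁻¹ := by positivity
  have := (tendsto_exp_atBot.comp (hsq.const_mul_atTop_of_neg (neg_lt_zero.2 hb))).const_mul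
    ((√(2 * π))⁻¹ * s⁻¹)
  rw [mul_zero] at this
  refine this.congr fun x => ?_
  simp only [Function.comp, normalDensity]
  ring_nf

lemma integrable_deriv_mean_normalDensity (t : ℝ) {s : ℝ} (hs : s ≠ 0) :
    Integrable fun x => (x - t) / s ^ 2 * normalDensity t s x :=
  ((integrable_pow_mul_normalDensity t hs 1).const_mul (s ^ 2)⁻¹).congr
    (ae_of_all _ fun x => by ring)

lemma integral_abs_deriv_mean_normalDensity (t : ℝ) {s : ℝ} (hs : 0 < s) :
    ∫ x, |(x - t) / s ^ 2 * normalDensity t s x| = √(2 / π) / s := by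
  have hD_int := integrable_deriv_mean_normalDensity t hs.ne'
  have hD_zero : ∫ x, (x - t) / s ^ 2 * normalDensity t s x = 0 :=
    integral_eq_zero_of_hasDerivAt_of_integrable
      (fun x => by simpa using (hasDerivAt_normalDensity t hs.ne' x).neg) hD_int
      (integrable_normalDensity t hs.ne').neg
  have hsign : ∀ x, 0 ≤ -((x - t) / s ^ 2 * normalDensity t s x) ↔ x ≤ t := fun x => by
    have := normalDensity_pos t x hs
    rw [show -((x - t) / s ^ 2 * normalDensity t s x) = (t - x) * (normalDensity t s x / s ^ 2)
      by ring, mul_nonneg_iff_of_pos_right (by positivity), sub_nonneg]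
  -- on `Iic t` the negative part is `∂ₓ` of the density, so it integrates to the peak value
  have hneg : ∫ x, max (-((x - t) / s ^ 2 * normalDensity t s x)) 0
      = ∫ x in Iic t, -((x - t) / s ^ 2 * normalDensity t s x) := by
    rw [← setIntegral_eq_integral_of_forall_compl_eq_zero fun x hx =>
      max_eq_right (le_of_not_ge fun h => hx ((hsign x).1 h))]
    exact setIntegral_congr_fun measurableSet_Iic fun x hx => max_eq_left ((hsign x).2 hx)
  rw [integral_abs_eq_two_mul_integral_negPart hD_int hD_zero, hneg,
    integral_Iic_of_hasDerivAt_of_tendsto' (fun x _ => hasDerivAt_normalDensity t hs.ne' x)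
      hD_int.neg.integrableOn (tendsto_normalDensity_atBot t hs.ne'),
    ← two_mul_inv_sqrt_two_mul_pi]
  simp [normalDensity]
  ring

lemma integral_abs_normalDensity_sub_mean_le (m₁ m₂ : ℝ) {s : ℝ} (hs : 0 < s) :
    ∫ x, |normalDensity m₁ s x - normalDensity m₂ s x| ≤ √(2 / π) / s * |m₁ - m₂| := by
  wlog h : m₂ ≤ m₁ generalizing m₁ m₂
  · simpa only [abs_sub_comm] using this m₂ m₁ (le_of_not_ge h)
  rw [abs_of_nonneg (sub_nonneg.mpr h)]
  have hD : Continuous (Function.uncurry fun t x => (x - t) / s ^ 2 * normalDensity t s x) := by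
    simp only [Function.uncurry_def, normalDensity, div_eq_mul_inv]
    fun_prop
  exact integral_abs_sub_le_of_hasDerivAt h
    (fun x t _ => hasDerivAt_normalDensity_mean hs.ne' x t)
    (fun x => (hD.comp (.prodMk_left x)).continuousOn) hD.measurable
    (fun t _ => integrable_deriv_mean_normalDensity t hs.ne')
    (fun t _ => (integral_abs_deriv_mean_normalDensity t hs).le)
    ((integrable_normalDensity m₁ hs.ne').sub (integrable_normalDensity m₂ hs.ne'))

lemma hasDerivAt_normalDensity_stdDev (m x : ℝ) {t : ℝ} (ht : t ≠ 0) :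
    HasDerivAt (normalDensity m · x) (((x - m) ^ 2 - t ^ 2) / t ^ 3 * normalDensity m t x) t := by
  have := ((hasDerivAt_inv ht).const_mul (√(2 * π))⁻¹).mul
    ((hasDerivAt_const t (-(x - m) ^ 2)).div ((hasDerivAt_pow 2 t).const_mul 2)
      (by positivity)).exp
  refine this.congr_deriv ?_
  simp only [Pi.div_apply, normalDensity]
  field_simp
  ring

lemma integrable_deriv_stdDev_normalDensity (m : ℝ) {t : ℝ} (ht : t ≠ 0) :
    Integrable fun x => ((x - m) ^ 2 - t ^ 2) / t ^ 3 * normalDensity m t x :=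
  (((integrable_pow_mul_normalDensity m ht 2).const_mul (t ^ 3)⁻¹).sub
    ((integrable_normalDensity m ht).const_mul t⁻¹)).congr (ae_of_all _ fun x => by
      simp only [Pi.sub_apply]
      field_simp)

lemma normalDensity_le (m x : ℝ) {s : ℝ} (hs : 0 < s) :
    normalDensity m s x ≤ (√(2 * π))⁻¹ * s⁻¹ := by
  unfold normalDensity
  refine mul_le_of_le_one_right (by positivity) (exp_le_one_iff.mpr ?_)
  exact div_nonpos_of_nonpos_of_nonneg (neg_nonpos.mpr (sq_nonneg _)) (by positivity)

lemma negPart_deriv_stdDev_normalDensity_le (m x : ℝ) {t : ℝ} (ht : 0 < t) :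
    max (-(((x - m) ^ 2 - t ^ 2) / t ^ 3 * normalDensity m t x)) 0
      ≤ (Icc (m - t) (m + t)).indicator (fun _ => (√(2 * π))⁻¹ / t ^ 2) x := by
  have hp := normalDensity_pos m x ht
  by_cases hx : x ∈ Icc (m - t) (m + t)
  · have hsq : (x - m) ^ 2 ≤ t ^ 2 := sq_le_sq' (by linarith [hx.1]) (by linarith [hx.2])
    rw [indicator_of_mem hx]
    refine max_le ?_ (by positivity)
    calc -(((x - m) ^ 2 - t ^ 2) / t ^ 3 * normalDensity m t x)
        = (t ^ 2 - (x - m) ^ 2) / t ^ 3 * normalDensity m t x := by ring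
      _ ≤ t ^ 2 / t ^ 3 * ((√(2 * π))⁻¹ * t⁻¹) :=
        mul_le_mul (by gcongr; linarith [sq_nonneg (x - m)]) (normalDensity_le m x ht) hp.le
          (by positivity)
      _ = (√(2 * π))⁻¹ / t ^ 2 := by field_simp
  · have hsq : t ^ 2 ≤ (x - m) ^ 2 := by
      rw [mem_Icc, not_and_or, not_le, not_le] at hx
      rcases hx with h | h <;> nlinarith
    rw [indicator_of_notMem hx, max_eq_right (neg_nonpos.mpr ?_)]
    exact mul_nonneg (div_nonneg (by linarith) (by positivity)) hp.le

lemma integral_abs_deriv_stdDev_normalDensity_le (m : ℝ) {t : ℝ} (ht : 0 < t) :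
    ∫ x, |((x - m) ^ 2 - t ^ 2) / t ^ 3 * normalDensity m t x| ≤ 2 * √(2 / π) / t := by
  have hD_int := integrable_deriv_stdDev_normalDensity m ht.ne'
  have hD_zero : ∫ x, ((x - m) ^ 2 - t ^ 2) / t ^ 3 * normalDensity m t x = 0 := by
    refine integral_eq_zero_of_hasDerivAt_of_integrable
      (f := fun x => -(x - m) / t * normalDensity m t x) (fun x => ?_) hD_int
      (((integrable_pow_mul_normalDensity m ht.ne' 1).const_mul (-t⁻¹)).congr
        (ae_of_all _ fun x => by ring))
    refine (((hasDerivAt_id x).sub_const m).neg.div_const t).mul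
      (hasDerivAt_normalDensity m ht.ne' x) |>.congr_deriv ?_
    simp only [Pi.neg_apply, id]
    field_simp
    ring
  have hind : Integrable ((Icc (m - t) (m + t)).indicator fun _ => (√(2 * π))⁻¹ / t ^ 2) :=
    (integrableOn_const measure_Icc_lt_top.ne).integrable_indicator measurableSet_Icc
  calc ∫ x, |((x - m) ^ 2 - t ^ 2) / t ^ 3 * normalDensity m t x|
      = 2 * ∫ x, max (-(((x - m) ^ 2 - t ^ 2) / t ^ 3 * normalDensity m t x)) 0 :=
        integral_abs_eq_two_mul_integral_negPart hD_int hD_zero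
    _ ≤ 2 * ∫ x, (Icc (m - t) (m + t)).indicator (fun _ => (√(2 * π))⁻¹ / t ^ 2) x :=
        mul_le_mul_of_nonneg_left
          (integral_mono hD_int.neg_part hind (negPart_deriv_stdDev_normalDensity_le m · ht))
          zero_le_two
    _ = 2 * √(2 / π) / t := by
        rw [integral_indicator_const _ measurableSet_Icc, volume_real_Icc_of_le (by linarith),
          smul_eq_mul, ← two_mul_inv_sqrt_two_mul_pi]
        field_simp
        ring

lemma integral_abs_normalDensity_sub_stdDev_le (m : ℝ) {s₁ s₂ : ℝ} (hs₁ : 0 < s₁)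
    (h : s₁ ≤ s₂) :
    ∫ x, |normalDensity m s₁ x - normalDensity m s₂ x| ≤ 2 * √(2 / π) / s₁ * (s₂ - s₁) := by
  simp only [abs_sub_comm (normalDensity m s₁ _)]
  have hpos : ∀ t ∈ Icc s₁ s₂, 0 < t := fun t ht => hs₁.trans_le ht.1
  refine integral_abs_sub_le_of_hasDerivAt h
    (fun x t ht => hasDerivAt_normalDensity_stdDev m x (hpos t ht).ne') (fun x => ?_) ?_
    (fun t ht => integrable_deriv_stdDev_normalDensity m (hpos t ht).ne')
    (fun t ht => (integral_abs_deriv_stdDev_normalDensity_le m (hpos t ht)).trans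
      (by gcongr; exact ht.1))
    ((integrable_normalDensity m (hs₁.trans_le h).ne').sub (integrable_normalDensity m hs₁.ne'))
  · simp only [normalDensity]
    fun_prop (disch := intro t ht; have := hpos t ht; positivity)
  · simp only [Function.uncurry_def, normalDensity]
    fun_prop

lemma tvDist_gaussianReal_le_of_le (μ₁ μ₂ : ℝ) {σ₁ σ₂ : ℝ} (hσ₁ : 0 < σ₁) (hle : σ₁ ≤ σ₂) :
    tvDist (gaussianReal μ₁ ⟨σ₁ ^ 2, sq_nonneg σ₁⟩) (gaussianReal μ₂ ⟨σ₂ ^ 2, sq_nonneg σ₂⟩)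
      ≤ √(2 / π) * (|μ₁ - μ₂| / (2 * σ₂) + σ₂ / σ₁ - 1) := by
  have hσ₂ := hσ₁.trans_le hle
  have hL1 := integral_abs_sub_le_add (integrable_normalDensity μ₁ hσ₁.ne')
    (integrable_normalDensity μ₁ hσ₂.ne') (integrable_normalDensity μ₂ hσ₂.ne')
  have hscale := integral_abs_normalDensity_sub_stdDev_le μ₁ hσ₁ hle
  have hmean := integral_abs_normalDensity_sub_mean_le μ₁ μ₂ hσ₂
  have harith : (2 * √(2 / π) / σ₁ * (σ₂ - σ₁) + √(2 / π) / σ₂ * |μ₁ - μ₂|) / 2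
      = √(2 / π) * (|μ₁ - μ₂| / (2 * σ₂) + σ₂ / σ₁ - 1) := by
    field_simp
    ring
  linarith [tvDist_gaussianReal_le μ₁ μ₂ hσ₁ hσ₂]

/-- For normal laws `N(μᵢ, σᵢ²)`,
`d_TV(N(μ₁,σ₁²), N(μ₂,σ₂²)) ≤ √(2/π)·(|μ₁-μ₂|/(2 max(σ₁,σ₂)) + max(σ₁,σ₂)/min(σ₁,σ₂) - 1)`. -/
theorem stmt11 (μ₁ μ₂ : ℝ) (σ₁ σ₂ : ℝ) (hσ₁ : 0 < σ₁) (hσ₂ : 0 < σ₂) :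
    tvDist (gaussianReal μ₁ ⟨σ₁ ^ 2, sq_nonneg σ₁⟩) (gaussianReal μ₂ ⟨σ₂ ^ 2, sq_nonneg σ₂⟩)
      ≤ Real.sqrt (2 / Real.pi)
        * (|μ₁ - μ₂| / (2 * max σ₁ σ₂) + max σ₁ σ₂ / min σ₁ σ₂ - 1) := by
  rcases le_total σ₁ σ₂ with hle | hle
  · rw [max_eq_right hle, min_eq_left hle]
    exact tvDist_gaussianReal_le_of_le μ₁ μ₂ hσ₁ hle
  · rw [max_eq_left hle, min_eq_right hle, tvDist_comm, abs_sub_comm]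
    exact tvDist_gaussianReal_le_of_le μ₂ μ₁ hσ₂ hle
end

section
/- For every σ > 1, setting x_σ = √( 2σ²·ln(σ) / (σ² − 1) ), one has d_TV(N(0,1), N(0,σ²)) = Φ(x_σ) − Φ(x_σ/σ) − Φ(−x_σ) + Φ(−x_σ/σ) ≤ √(2/π)·(σ − 1), where Φ is the standard normal cumulative distribution function. -/
open MeasureTheory ProbabilityTheory

/-- The standard normal cumulative distribution function `Φ`. -/
noncomputable def Phi : ℝ → ℝ := fun x => cdf (gaussianReal 0 1) x

/-!
The density of `N(0,1)` dominates that of `N(0,σ²)` exactly on `S = [-x_σ, x_σ]`, so by Scheffé's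
identity the total variation distance is `N(0,1)(S) - N(0,σ²)(S)`, and scaling by `σ` turns the
second term into `Φ(x_σ/σ) - Φ(-x_σ/σ)`. For the bound, `Φ` is `(2π)^{-1/2}`-Lipschitz, so the
distance is at most `2 (x_σ - x_σ/σ) / √(2π) = √(2/π) x_σ (σ - 1)/σ`, and `x_σ ≤ σ` because
`log σ² ≤ σ² - 1`.
-/

section Scheffe

variable {α : Type*} [MeasurableSpace α] {μ ν : Measure α} {S A : Set α}

lemma measureReal_sub_le_of_restrict_le [IsFiniteMeasure μ] [IsFiniteMeasure ν]
    (hS : MeasurableSet S) (hA : MeasurableSet A) (hνμ : ν.restrict S ≤ μ.restrict S)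
    (hμν : μ.restrict Sᶜ ≤ ν.restrict Sᶜ) :
    μ.real A - ν.real A ≤ μ.real S - ν.real S := by
  have hout : μ.real (A \ S) ≤ ν.real (A \ S) := by
    have := Measure.le_iff'.1 hμν A
    rw [Measure.restrict_apply' hS.compl, Measure.restrict_apply' hS.compl, ← Set.sdiff_eq] at this
    exact ENNReal.toReal_mono (measure_ne_top _ _) this
  have hin : ν.real (S \ A) ≤ μ.real (S \ A) := by
    have := Measure.le_iff'.1 hνμ Aᶜ
    rw [Measure.restrict_apply' hS, Measure.restrict_apply' hS, ← Set.sdiff_eq_compl_inter]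
      at this
    exact ENNReal.toReal_mono (measure_ne_top _ _) this
  rw [← measureReal_inter_add_sdiff (μ := μ) hS, ← measureReal_inter_add_sdiff (μ := ν) hS,
    ← measureReal_inter_add_sdiff (s := S) (μ := μ) hA,
    ← measureReal_inter_add_sdiff (s := S) (μ := ν) hA, Set.inter_comm S A]
  linarith

lemma abs_measureReal_sub_le_of_restrict_le [IsProbabilityMeasure μ] [IsProbabilityMeasure ν]
    (hS : MeasurableSet S) (hA : MeasurableSet A) (hνμ : ν.restrict S ≤ μ.restrict S)
    (hμν : μ.restrict Sᶜ ≤ ν.restrict Sᶜ) :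
    |μ.real A - ν.real A| ≤ μ.real S - ν.real S := by
  have hcompl := measureReal_sub_le_of_restrict_le hS hA.compl hνμ hμν
  rw [measureReal_compl hA, measureReal_compl hA, probReal_univ, probReal_univ] at hcompl
  exact abs_sub_le_iff.2 ⟨measureReal_sub_le_of_restrict_le hS hA hνμ hμν, by linarith⟩

end Scheffe

theorem tvDist_eq_of_restrict_le {μ ν : Measure ℝ} [IsProbabilityMeasure μ]
    [IsProbabilityMeasure ν] {S : Set ℝ} (hS : MeasurableSet S)
    (hνμ : ν.restrict S ≤ μ.restrict S) (hμν : μ.restrict Sᶜ ≤ ν.restrict Sᶜ) :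
    tvDist μ ν = μ.real S - ν.real S := by
  have hle : ∀ A : {s : Set ℝ // MeasurableSet s},
      |(μ A.1).toReal - (ν A.1).toReal| ≤ μ.real S - ν.real S :=
    fun A => abs_measureReal_sub_le_of_restrict_le hS A.2 hνμ hμν
  refine le_antisymm (ciSup_le hle) ?_
  exact le_ciSup_of_le ⟨_, Set.forall_mem_range.2 hle⟩ ⟨S, hS⟩ (le_abs_self _)

lemma measureReal_Icc_eq_cdf_sub (P : Measure ℝ) [IsProbabilityMeasure P] [NullSingletonClass P]
    {a b : ℝ} (hab : a ≤ b) : P.real (Set.Icc a b) = cdf P b - cdf P a := by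
  have h := (cdf P).measure_Ioc a b
  rw [measure_cdf] at h
  rw [← measureReal_congr Ioc_ae_eq_Icc, measureReal_def, h,
    ENNReal.toReal_ofReal (sub_nonneg.2 ((cdf P).mono hab))]

lemma gaussianReal_restrict_le_of_pdf_le {m : ℝ} {v w : NNReal} (hv : v ≠ 0) (hw : w ≠ 0)
    {s : Set ℝ} (h : ∀ y ∈ s, gaussianPDFReal m v y ≤ gaussianPDFReal m w y) :
    (gaussianReal m v).restrict s ≤ (gaussianReal m w).restrict s := by
  refine Measure.le_iff.2 fun t ht => ?_
  rw [Measure.restrict_apply ht, Measure.restrict_apply ht, gaussianReal_apply m hv,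
    gaussianReal_apply m hw]
  exact setLIntegral_mono (measurable_gaussianPDF m w)
    fun y hy => ENNReal.ofReal_le_ofReal (h y hy.2)

lemma gaussianPDFReal_le_inv_sqrt (m : ℝ) (v : NNReal) (y : ℝ) :
    gaussianPDFReal m v y ≤ (√(2 * Real.pi * v))⁻¹ := by
  rw [gaussianPDFReal_def]
  refine mul_le_of_le_one_right (by positivity) (Real.exp_le_one_iff.2 ?_)
  exact div_nonpos_of_nonpos_of_nonneg (neg_nonpos.2 (sq_nonneg _)) (by positivity)

lemma gaussianReal_real_Icc_le (m : ℝ) {v : NNReal} (hv : v ≠ 0) {a b : ℝ} (hab : a ≤ b) :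
    (gaussianReal m v).real (Set.Icc a b) ≤ (b - a) / √(2 * Real.pi * v) := by
  rw [measureReal_def, gaussianReal_apply_eq_integral m hv,
    ENNReal.toReal_ofReal (setIntegral_nonneg measurableSet_Icc
      fun y _ => gaussianPDFReal_nonneg m v y)]
  calc ∫ y in Set.Icc a b, gaussianPDFReal m v y
      ≤ (√(2 * Real.pi * v))⁻¹ * volume.real (Set.Icc a b) := by
        refine (Real.le_norm_self _).trans (norm_setIntegral_le_of_norm_le_const
          measure_Icc_lt_top fun y _ => ?_)
        rw [Real.norm_of_nonneg (gaussianPDFReal_nonneg m v y)]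
        exact gaussianPDFReal_le_inv_sqrt m v y
    _ = (b - a) / √(2 * Real.pi * v) := by
        rw [Real.volume_real_Icc_of_le hab, inv_mul_eq_div]

lemma Phi_sub_Phi_le {a b : ℝ} (hab : a ≤ b) : Phi b - Phi a ≤ (b - a) / √(2 * Real.pi) := by
  have := nullSingletonClass_gaussianReal (μ := 0) one_ne_zero
  have h := gaussianReal_real_Icc_le 0 one_ne_zero hab
  rw [measureReal_Icc_eq_cdf_sub _ hab, NNReal.coe_one, mul_one] at h
  exact h

lemma gaussianReal_real_Icc_of_coe_eq_sq {σ : ℝ} (hσ : 0 < σ) {v : NNReal} (hv : (v : ℝ) = σ ^ 2)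
    {a b : ℝ} (hab : a ≤ b) :
    (gaussianReal 0 v).real (Set.Icc a b) = Phi (b / σ) - Phi (a / σ) := by
  have := nullSingletonClass_gaussianReal (μ := 0) one_ne_zero
  have hmap : (gaussianReal 0 1).map (σ * ·) = gaussianReal 0 v := by
    rw [gaussianReal_map_const_mul, mul_zero, mul_one]
    congr 1
    exact NNReal.eq hv.symm
  rw [← hmap, map_measureReal_apply (measurable_const_mul σ) measurableSet_Icc,
    Set.preimage_const_mul_Icc₀ _ _ hσ,
    measureReal_Icc_eq_cdf_sub _ (div_le_div_of_nonneg_right hab hσ.le)]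
  rfl

lemma gaussianPDFReal_le_iff_of_coe_eq_sq {σ : ℝ} (hσ : 1 < σ) {v : NNReal}
    (hv : (v : ℝ) = σ ^ 2) (y : ℝ) :
    gaussianPDFReal 0 v y ≤ gaussianPDFReal 0 1 y ↔
      y ^ 2 ≤ 2 * σ ^ 2 * Real.log σ / (σ ^ 2 - 1) := by
  have hσ0 : 0 < σ := by linarith
  have hσ21 : 0 < σ ^ 2 - 1 := by nlinarith
  have hsqrt : √(2 * Real.pi * σ ^ 2) = √(2 * Real.pi) * σ := by
    rw [Real.sqrt_mul (by positivity), Real.sqrt_sq hσ0.le]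
  simp only [gaussianPDFReal_def, hv, NNReal.coe_one, sub_zero, mul_one]
  rw [hsqrt, mul_inv, mul_assoc, mul_le_mul_iff_of_pos_left (by positivity), inv_mul_le_iff₀ hσ0,
    ← Real.exp_log hσ0, ← Real.exp_add, Real.exp_log hσ0, Real.exp_le_exp, le_div_iff₀ hσ21,
    div_le_iff₀ (by positivity)]
  constructor <;> intro h <;> nlinarith [h]

lemma sqrt_two_mul_sq_mul_log_div_le {σ : ℝ} (hσ : 1 < σ) :
    √(2 * σ ^ 2 * Real.log σ / (σ ^ 2 - 1)) ≤ σ := by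
  have hσ21 : 0 < σ ^ 2 - 1 := by nlinarith
  have hlog : 2 * Real.log σ ≤ σ ^ 2 - 1 := by
    have := Real.log_le_sub_one_of_pos (pow_pos (by linarith : (0 : ℝ) < σ) 2)
    rwa [Real.log_pow, Nat.cast_ofNat] at this
  refine Real.sqrt_le_iff.2 ⟨by linarith, ?_⟩
  rw [div_le_iff₀ hσ21]
  nlinarith [sq_nonneg σ]

lemma Phi_sub_Phi_sub_Phi_add_Phi_le {x σ : ℝ} (hx : 0 ≤ x) (hxσ : x ≤ σ) (hσ : 1 ≤ σ) :
    Phi x - Phi (x / σ) - Phi (-x) + Phi (-(x / σ)) ≤ √(2 / Real.pi) * (σ - 1) := by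
  have hσ0 : 0 < σ := by linarith
  have hxdiv : x / σ ≤ x := div_le_self hx hσ
  have hgap : x - x / σ ≤ σ - 1 := by
    rw [show x - x / σ = x * (σ - 1) / σ by field_simp, div_le_iff₀ hσ0]
    nlinarith
  have hconst : √(2 / Real.pi) = 2 / √(2 * Real.pi) := by
    rw [eq_div_iff (by positivity), ← Real.sqrt_mul (by positivity),
      show 2 / Real.pi * (2 * Real.pi) = 2 ^ 2 by field_simp, Real.sqrt_sq zero_le_two]
  calc Phi x - Phi (x / σ) - Phi (-x) + Phi (-(x / σ))
      = (Phi x - Phi (x / σ)) + (Phi (-(x / σ)) - Phi (-x)) := by ring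
    _ ≤ (x - x / σ) / √(2 * Real.pi) + (-(x / σ) - -x) / √(2 * Real.pi) :=
        add_le_add (Phi_sub_Phi_le hxdiv) (Phi_sub_Phi_le (neg_le_neg hxdiv))
    _ = 2 / √(2 * Real.pi) * (x - x / σ) := by ring
    _ ≤ √(2 / Real.pi) * (σ - 1) := by
        rw [hconst]; exact mul_le_mul_of_nonneg_left hgap (by positivity)

/-- For `σ > 1`, with `x_σ = √(2σ² ln σ/(σ²-1))`,
`d_TV(N(0,1), N(0,σ²)) = Φ(x_σ) - Φ(x_σ/σ) - Φ(-x_σ) + Φ(-x_σ/σ) ≤ √(2/π)(σ-1)`. -/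
theorem stmt13 (σ : ℝ) (hσ : 1 < σ) :
    tvDist (gaussianReal 0 1) (gaussianReal 0 ⟨σ ^ 2, sq_nonneg σ⟩)
        = Phi (Real.sqrt (2 * σ ^ 2 * Real.log σ / (σ ^ 2 - 1)))
          - Phi (Real.sqrt (2 * σ ^ 2 * Real.log σ / (σ ^ 2 - 1)) / σ)
          - Phi (-Real.sqrt (2 * σ ^ 2 * Real.log σ / (σ ^ 2 - 1)))
          + Phi (-(Real.sqrt (2 * σ ^ 2 * Real.log σ / (σ ^ 2 - 1)) / σ)) ∧
      tvDist (gaussianReal 0 1) (gaussianReal 0 ⟨σ ^ 2, sq_nonneg σ⟩)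
        ≤ Real.sqrt (2 / Real.pi) * (σ - 1) := by
  have hσ0 : 0 < σ := by linarith
  set c := 2 * σ ^ 2 * Real.log σ / (σ ^ 2 - 1)
  have hc : 0 ≤ c := div_nonneg (by have := Real.log_pos hσ; positivity) (by nlinarith)
  set v : NNReal := ⟨σ ^ 2, sq_nonneg σ⟩
  have hv : (v : ℝ) = σ ^ 2 := rfl
  have hv0 : v ≠ 0 := fun h => (pow_pos hσ0 2).ne' (by rw [← hv, h, NNReal.coe_zero])
  have hmem (y : ℝ) : y ∈ Set.Icc (-√c) √c ↔ gaussianPDFReal 0 v y ≤ gaussianPDFReal 0 1 y := by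
    rw [gaussianPDFReal_le_iff_of_coe_eq_sq hσ hv, Real.sq_le hc, Set.mem_Icc]
  have htv : tvDist (gaussianReal 0 1) (gaussianReal 0 v) =
      Phi √c - Phi (√c / σ) - Phi (-√c) + Phi (-(√c / σ)) := by
    have := nullSingletonClass_gaussianReal (μ := 0) one_ne_zero
    have hle : -√c ≤ √c := neg_le_self (Real.sqrt_nonneg c)
    rw [tvDist_eq_of_restrict_le measurableSet_Icc
      (gaussianReal_restrict_le_of_pdf_le hv0 one_ne_zero fun y hy => (hmem y).1 hy)
      (gaussianReal_restrict_le_of_pdf_le one_ne_zero hv0 fun y hy =>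
        (le_of_not_ge fun h => hy ((hmem y).2 h))),
      measureReal_Icc_eq_cdf_sub _ hle, gaussianReal_real_Icc_of_coe_eq_sq hσ0 hv hle, neg_div]
    simp only [Phi]
    ring
  rw [htv]
  exact ⟨rfl, Phi_sub_Phi_sub_Phi_add_Phi_le (Real.sqrt_nonneg c)
    (sqrt_two_mul_sq_mul_log_div_le hσ) hσ.le⟩
end

section
/- Let g be a probability density on ℝ that is even (g(−x) = g(x) for all x) and nonincreasing on [0, ∞), let G be its cumulative distribution function, and let X be a random variable with density g. Then for every γ > 0, d_TV(X, X + γ) = sup_{x ∈ ℝ} |G(x) − G(x − γ)| = ∫_{−γ/2}^{γ/2} g(x) dx. -/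
open MeasureTheory

/-- If `g` is an even probability density on `ℝ`, nonincreasing on `[0,∞)`, with cdf `G`, and
`X` has density `g`, then for every `γ > 0`,
`d_TV(X, X+γ) = sup_x |G(x) - G(x-γ)| = ∫_{-γ/2}^{γ/2} g(x) dx`. -/
theorem stmt16 (g : ℝ → ℝ) (hgm : Measurable g) (hg0 : ∀ x, 0 ≤ g x)
    (hgint : ∫ x, g x = 1) (heven : ∀ x, g (-x) = g x)
    (hmono : AntitoneOn g (Set.Ici 0)) (γ : ℝ) (hγ : 0 < γ) :
    tvDist (volume.withDensity fun x => ENNReal.ofReal (g x))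
          (Measure.map (fun x => x + γ) (volume.withDensity fun x => ENNReal.ofReal (g x)))
        = (⨆ x : ℝ, |(∫ t in Set.Iic x, g t) - ∫ t in Set.Iic (x - γ), g t|) ∧
      (⨆ x : ℝ, |(∫ t in Set.Iic x, g t) - ∫ t in Set.Iic (x - γ), g t|)
        = ∫ x in (-(γ / 2))..(γ / 2), g x := by
  haveI : Nonempty {s : Set ℝ // MeasurableSet s} := ⟨⟨∅, MeasurableSet.empty⟩⟩
  set μ := volume.withDensity fun x => ENNReal.ofReal (g x) with hμdef
  set ν := Measure.map (fun x => x + γ) μ with hνdef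
  have hInt : Integrable g := by
    by_contra h
    rw [integral_undef h] at hgint; norm_num at hgint
  have hIntg' : Integrable (fun x => g (x - γ)) := hInt.comp_sub_right γ
  -- measure of sets under μ
  have hμA : ∀ A : Set ℝ, MeasurableSet A → (μ A).toReal = ∫ x in A, g x := by
    intro A hA
    rw [hμdef, withDensity_apply _ hA,
      ← ofReal_integral_eq_lintegral_ofReal hInt.restrict
        (Filter.Eventually.of_forall hg0),
      ENNReal.toReal_ofReal (setIntegral_nonneg hA fun x _ => hg0 x)]
  -- translation of set integrals
  have hshift : ∀ A : Set ℝ, MeasurableSet A →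
      (∫ x in A, g (x - γ)) = ∫ x in (fun x => x + γ) ⁻¹' A, g x := by
    intro A hA
    calc ∫ x in A, g (x - γ)
        = ∫ x, A.indicator (fun y => g (y - γ)) x := (integral_indicator hA).symm
      _ = ∫ x, A.indicator (fun y => g (y - γ)) (x + γ) :=
          (integral_add_right_eq_self _ γ).symm
      _ = ∫ x, ((fun x => x + γ) ⁻¹' A).indicator g x := by
          congr 1; funext x
          by_cases hx : x + γ ∈ A <;> simp [Set.indicator, hx, Set.mem_preimage]
      _ = ∫ x in (fun x => x + γ) ⁻¹' A, g x :=
          integral_indicator (hA.preimage (measurable_add_const γ))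
  have hpre : ∀ c : ℝ, (fun x : ℝ => x + γ) ⁻¹' Set.Iic c = Set.Iic (c - γ) := by
    intro c; ext x; simp [Set.mem_preimage, le_sub_iff_add_le]
  -- measure of sets under ν
  have hνA : ∀ A : Set ℝ, MeasurableSet A → (ν A).toReal = ∫ x in A, g (x - γ) := by
    intro A hA
    rw [hνdef, Measure.map_apply (measurable_add_const γ) hA,
      hμA _ (hA.preimage (measurable_add_const γ)), hshift A hA]
  -- pointwise comparisons
  have habs : ∀ x : ℝ, g |x| = g x := by
    intro x
    rcases abs_cases x with ⟨h, _⟩ | ⟨h, _⟩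
    · rw [h]
    · rw [h, heven]
  have hcomp : ∀ a b : ℝ, |a| ≤ |b| → g b ≤ g a := by
    intro a b hab
    rw [← habs a, ← habs b]
    exact hmono (Set.mem_Ici.2 (abs_nonneg a)) (Set.mem_Ici.2 (abs_nonneg b)) hab
  have key1 : ∀ x : ℝ, x ≤ γ / 2 → g (x - γ) ≤ g x := by
    intro x hx
    refine hcomp x (x - γ) ?_
    rcases le_or_gt 0 x with h | h
    · rw [abs_of_nonneg h, abs_of_nonpos (by linarith : x - γ ≤ 0)]; linarith
    · rw [abs_of_neg h, abs_of_nonpos (by linarith : x - γ ≤ 0)]; linarith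
  have key2 : ∀ x : ℝ, γ / 2 ≤ x → g x ≤ g (x - γ) := by
    intro x hx
    refine hcomp (x - γ) x ?_
    have hx0 : (0:ℝ) ≤ x := by linarith
    rw [abs_of_nonneg hx0]
    rcases le_or_gt 0 (x - γ) with h | h
    · rw [abs_of_nonneg h]; linarith
    · rw [abs_of_neg h]; linarith
  -- the difference function
  set d : ℝ → ℝ := fun x => g x - g (x - γ) with hd
  have hdInt : Integrable d := hInt.sub hIntg'
  have hdint0 : ∫ x, d x = 0 := by
    rw [hd, integral_sub hInt hIntg', integral_sub_right_eq_self g γ, sub_self]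
  set I : ℝ := (∫ t in Set.Iic (γ / 2), g t) - ∫ t in Set.Iic (-(γ / 2)), g t with hI
  have hI_eq : ∫ x in Set.Iic (γ / 2), d x = I := by
    rw [hd, integral_sub hInt.integrableOn hIntg'.integrableOn, hI,
      hshift _ measurableSet_Iic, hpre]
    have h : γ / 2 - γ = -(γ / 2) := by ring
    rw [h]
  have hI_nonneg : 0 ≤ I := by
    rw [← hI_eq]
    exact setIntegral_nonneg measurableSet_Iic fun x hx => sub_nonneg.2 (key1 x hx)
  clear_value I
  -- key bound
  have hbound : ∀ A : Set ℝ, MeasurableSet A →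
      |(∫ x in A, g x) - ∫ x in A, g (x - γ)| ≤ I := by
    intro A hA
    have hAd : (∫ x in A, g x) - ∫ x in A, g (x - γ) = ∫ x in A, d x :=
      (integral_sub hInt.integrableOn hIntg'.integrableOn).symm
    rw [hAd, abs_le]
    constructor
    · -- lower bound : -I ≤ ∫_A d
      have hsplit : (∫ x in A ∩ Set.Ioi (γ / 2), d x) + ∫ x in A \ Set.Ioi (γ / 2), d x
          = ∫ x in A, d x := integral_inter_add_diff measurableSet_Ioi hdInt.integrableOn
      have h1 : ∫ x in A ∩ Set.Ioi (γ / 2), d x ≥ ∫ x in Set.Ioi (γ / 2), d x := by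
        have := setIntegral_mono_set (f := fun x => -d x) (s := A ∩ Set.Ioi (γ / 2))
          (t := Set.Ioi (γ / 2)) hdInt.neg.integrableOn
          ((ae_restrict_iff' measurableSet_Ioi).2 (Filter.Eventually.of_forall
            fun x hx => neg_nonneg.2 (sub_nonpos.2 (key2 x (le_of_lt hx)))))
          (HasSubset.Subset.eventuallyLE Set.inter_subset_right)
        simp only [integral_neg] at this
        linarith
      have h2 : 0 ≤ ∫ x in A \ Set.Ioi (γ / 2), d x := by
        refine setIntegral_nonneg (hA.diff measurableSet_Ioi) fun x hx => ?_
        have : x ≤ γ / 2 := le_of_not_gt hx.2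
        exact sub_nonneg.2 (key1 x this)
      have hIoi : ∫ x in Set.Ioi (γ / 2), d x = -I := by
        have := intervalIntegral.integral_Iic_add_Ioi (b := γ / 2) hdInt.integrableOn hdInt.integrableOn
        rw [hdint0, hI_eq] at this
        linarith
      linarith
    · -- upper bound : ∫_A d ≤ I
      have hsplit : (∫ x in A ∩ Set.Iic (γ / 2), d x) + ∫ x in A \ Set.Iic (γ / 2), d x
          = ∫ x in A, d x := integral_inter_add_diff measurableSet_Iic hdInt.integrableOn
      have h1 : ∫ x in A ∩ Set.Iic (γ / 2), d x ≤ ∫ x in Set.Iic (γ / 2), d x :=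
        setIntegral_mono_set hdInt.integrableOn
          ((ae_restrict_iff' measurableSet_Iic).2 (Filter.Eventually.of_forall
            fun x hx => sub_nonneg.2 (key1 x hx)))
          (HasSubset.Subset.eventuallyLE Set.inter_subset_right)
      have h2 : ∫ x in A \ Set.Iic (γ / 2), d x ≤ 0 := by
        refine setIntegral_nonpos (hA.diff measurableSet_Iic) fun x hx => ?_
        have : γ / 2 ≤ x := le_of_lt (lt_of_not_ge hx.2)
        exact sub_nonpos.2 (key2 x this)
      rw [← hI_eq]
      linarith
  -- bound in terms of measures
  have hbound' : ∀ A : Set ℝ, MeasurableSet A → |(μ A).toReal - (ν A).toReal| ≤ I := by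
    intro A hA
    rw [hμA A hA, hνA A hA]
    exact hbound A hA
  -- cdf differences as measure differences
  have hcdf : ∀ x : ℝ, |(∫ t in Set.Iic x, g t) - ∫ t in Set.Iic (x - γ), g t|
      = |(μ (Set.Iic x)).toReal - (ν (Set.Iic x)).toReal| := by
    intro x
    rw [hμA _ measurableSet_Iic, hνA _ measurableSet_Iic, hshift _ measurableSet_Iic, hpre]
  have hFval : |(∫ t in Set.Iic (γ / 2), g t) - ∫ t in Set.Iic (γ / 2 - γ), g t| = I := by
    have : γ / 2 - γ = -(γ / 2) := by ring
    rw [this, ← hI, abs_of_nonneg hI_nonneg]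
  have hFle : ∀ x : ℝ, |(∫ t in Set.Iic x, g t) - ∫ t in Set.Iic (x - γ), g t| ≤ I := by
    intro x
    rw [hcdf x]
    exact hbound' _ measurableSet_Iic
  -- sup of cdf differences
  have hsup2 : (⨆ x : ℝ, |(∫ t in Set.Iic x, g t) - ∫ t in Set.Iic (x - γ), g t|) = I := by
    refine le_antisymm (ciSup_le hFle) ?_
    have hB : BddAbove (Set.range fun x : ℝ =>
        |(∫ t in Set.Iic x, g t) - ∫ t in Set.Iic (x - γ), g t|) := by
      refine ⟨I, ?_⟩
      rintro _ ⟨x, rfl⟩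
      exact hFle x
    have := le_ciSup hB (γ / 2)
    rwa [hFval] at this
  have hsup1 : tvDist μ ν = I := by
    refine le_antisymm (ciSup_le fun A => hbound' A.1 A.2) ?_
    have hB : BddAbove (Set.range fun A : {s : Set ℝ // MeasurableSet s} =>
        |(μ A.1).toReal - (ν A.1).toReal|) := by
      refine ⟨I, ?_⟩
      rintro _ ⟨A, rfl⟩
      exact hbound' A.1 A.2
    have := le_ciSup hB (⟨Set.Iic (γ / 2), measurableSet_Iic⟩ : {s : Set ℝ // MeasurableSet s})
    have hval : |(μ (Set.Iic (γ / 2))).toReal - (ν (Set.Iic (γ / 2))).toReal| = I := by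
      rw [← hcdf (γ / 2), hFval]
    rwa [hval] at this
  have hIint : I = ∫ x in (-(γ / 2))..(γ / 2), g x := by
    rw [hI]
    exact intervalIntegral.integral_Iic_sub_Iic hInt.integrableOn hInt.integrableOn
  exact ⟨hsup1.trans hsup2.symm, hsup2.trans hIint⟩
end
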